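/- arXiv:math/0501246 — 7 statements merged into one kernel-verified Lean document; each statement's English description precedes it below -/
import Mathlib

section
/- The normalized volume of the hypersimplex Δ_{k,n} = {x ∈ [0,1]^{n-1} : k-1 ≤ x_1+⋯+x_{n-1} ≤ k} equals the Eulerian number A_{k,n-1}, the number of permutations of {1,…,n-1} with exactly k-1 descents. -/
/-!
Stanley's proof. For `x ∈ [0,1]^m` let `s₀ = 0, s₁, …, s_m` be its partial sums. For almost every
`x` the fractional parts of the `sⱼ` are distinct; then `⌊s_{i+1}⌋ - ⌊s_i⌋` is `1` exactly when the
fractional parts descend at `i`, so `⌊∑ x⌋` is the number of descents of the permutation `v` that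
sorts `y = (frac s₁, …, frac s_m)`. Conversely `x` is recovered from `y` as `Δy + d_v`, where `Δ` is
the difference operator (unimodular) and `d_v` the `0/1` vector of descents of `v`; so the `x`
belonging to `v` form a volume-preserving affine image of the order simplex
`{0 < y_{v⁻¹ 0} < ⋯ < y_{v⁻¹ (m-1)} < 1}`, of volume `1 / m!`. These pieces are disjoint, and up
to a null set those with `k - 1` descents make up the hypersimplex.
-/

open MeasureTheory

/-- Number of descents of a permutation of `Fin m` (positions `i` with `w i > w (i+1)`). -/
def numDescents {m : ℕ} (w : Equiv.Perm (Fin m)) : ℕ :=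
  (Finset.univ.filter (fun i : Fin m => (i : ℕ) + 1 < m ∧ w ⟨((i : ℕ) + 1) % m, Nat.mod_lt _ i.pos⟩ < w i)).card

namespace Fin

variable {m : ℕ}

theorem partialSum_last {M : Type*} [AddCommMonoid M] (f : Fin m → M) :
    partialSum f (last m) = ∑ i, f i := by
  rw [partialSum, val_last, List.take_of_length_le (by simp), List.sum_ofFn]

theorem partialSum_mem {M : Type*} [AddMonoid M] {S : AddSubmonoid M} {f : Fin m → M}
    (hf : ∀ j, f j ∈ S) (i : Fin (m + 1)) : partialSum f i ∈ S := by
  induction i using Fin.induction with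
  | zero => simp [S.zero_mem]
  | succ i ih => rw [partialSum_succ]; exact S.add_mem ih (hf i)

theorem partialSum_succ_sub_castSucc {G : Type*} [AddCommGroup G] (f : Fin (m + 1) → G)
    (h0 : f 0 = 0) : partialSum (fun i => f i.succ - f i.castSucc) = f := by
  simpa [h0, sub_eq_neg_add] using partialSum_left_neg f

theorem partialSum_single (j : Fin m) (i : Fin (m + 1)) :
    partialSum (Pi.single j (1 : ℝ)) i = if j.castSucc < i then 1 else 0 := by
  induction i using Fin.induction with
  | zero => simp
  | succ i ih =>
    simp only [partialSum_succ, ih, Pi.single_apply, castSucc_lt_succ_iff,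
      castSucc_lt_castSucc_iff]
    rcases lt_trichotomy i j with h | rfl | h
    · simp [h.ne, not_le.2 h, not_lt.2 h.le]
    · simp
    · simp [h.ne', h, h.le]

theorem partialSum_const_one (i : Fin (m + 1)) : partialSum (fun _ => (1 : ℝ)) i = i := by
  induction i using Fin.induction with
  | zero => simp
  | succ i ih => simp [partialSum_succ, ih]

variable (R M : Type*) [Semiring R] [AddCommMonoid M] [Module R M]

def partialSumₗ : (Fin m → M) →ₗ[R] (Fin (m + 1) → M) where
  toFun := partialSum
  map_add' f g := by
    ext i
    induction i using Fin.induction with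
    | zero => simp
    | succ i ih => simp only [partialSum_succ, ih, Pi.add_apply]; abel
  map_smul' c f := by
    ext i
    induction i using Fin.induction with
    | zero => simp
    | succ i ih => simp_all [partialSum_succ, smul_add]

@[simp]
theorem coe_partialSumₗ : ⇑(partialSumₗ R M : (Fin m → M) →ₗ[R] _) = partialSum := rfl

end Fin

section FloorRing

variable {R : Type*} [CommRing R] [LinearOrder R] [IsStrictOrderedRing R] [FloorRing R]

theorem Int.fract_sub_of_mem_Ico {a b : R} (ha : a ∈ Set.Ico 0 1) (hb : b ∈ Set.Ico 0 1) :
    Int.fract (b - a) = b - a + if b < a then 1 else 0 := by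
  obtain ⟨ha0, ha1⟩ := ha
  obtain ⟨hb0, hb1⟩ := hb
  rw [Int.fract_eq_iff]
  split_ifs
  · exact ⟨by linarith, by linarith, -1, by simp⟩
  · exact ⟨by linarith, by linarith, 0, by simp⟩

theorem Int.floor_sub_floor_eq_ite {a b : R} (hab : a ≤ b) (hba : b ≤ a + 1)
    (hne : Int.fract a ≠ Int.fract b) :
    ((⌊b⌋ - ⌊a⌋ : ℤ) : R) = if Int.fract b < Int.fract a then 1 else 0 := by
  have hlt : b - a < 1 := by
    refine lt_of_le_of_ne (by linarith) fun h => hne ?_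
    exact Int.fract_eq_fract.2 ⟨-1, by push_cast; linarith⟩
  have hfract : Int.fract (b - a) = Int.fract (Int.fract b - Int.fract a) :=
    Int.fract_eq_fract.2 ⟨⌊b⌋ - ⌊a⌋, by simp only [Int.fract]; push_cast; ring⟩
  rw [Int.fract_eq_self.2 ⟨by linarith, hlt⟩, Int.fract_sub_of_mem_Ico
    ⟨Int.fract_nonneg a, Int.fract_lt_one a⟩ ⟨Int.fract_nonneg b, Int.fract_lt_one b⟩] at hfract
  have := Int.floor_add_fract a
  have := Int.floor_add_fract b
  push_cast
  linarith

end FloorRing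

theorem MeasureTheory.measure_eq_of_subset_of_subset_union_null {α : Type*} [MeasurableSpace α]
    {μ : Measure α} {s t n : Set α} (hst : s ⊆ t) (hts : t ⊆ s ∪ n) (hn : μ n = 0) :
    μ t = μ s :=
  le_antisymm ((measure_mono hts).trans ((measure_union_le s n).trans (by rw [hn, add_zero])))
    (measure_mono hst)

theorem MeasureTheory.Measure.addHaar_preimage_dual_countable {E : Type*} [NormedAddCommGroup E]
    [NormedSpace ℝ E] [MeasurableSpace E] [BorelSpace E] [FiniteDimensional ℝ E] (μ : Measure E)
    [μ.IsAddHaarMeasure] {ℓ : E →ₗ[ℝ] ℝ} (hℓ : ℓ ≠ 0) {C : Set ℝ} (hC : C.Countable) :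
    μ (ℓ ⁻¹' C) = 0 := by
  obtain ⟨c, -, hc⟩ := ℓ.exists_map_addHaar_eq_smul_addHaar μ volume (LinearMap.surjective hℓ)
  rw [← Measure.map_apply ℓ.continuous_of_finiteDimensional.measurable hC.measurableSet, hc,
    Measure.smul_apply, hC.measure_zero, smul_zero]

namespace Hypersimplex

open Set Function Equiv
open scoped Nat ENNReal

variable {m : ℕ}

def orderSimplex (v : Perm (Fin m)) : Set (Fin m → ℝ) :=
  {y | (∀ i, y i ∈ Ioo 0 1) ∧ StrictMono (y ∘ v.symm)}

theorem lt_iff_of_mem_orderSimplex {v : Perm (Fin m)} {y : Fin m → ℝ} (hy : y ∈ orderSimplex v)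
    (i j : Fin m) : y i < y j ↔ v i < v j := by
  simpa using hy.2.lt_iff_lt (a := v i) (b := v j)

theorem symm_eq_sort_of_mem_orderSimplex {v : Perm (Fin m)} {y : Fin m → ℝ}
    (hy : y ∈ orderSimplex v) : v.symm = Tuple.sort y :=
  Tuple.eq_sort_iff.2 ⟨hy.2.monotone, fun _ _ hij h => absurd h (hy.2 hij).ne⟩

theorem mem_orderSimplex_sort {y : Fin m → ℝ} (hy : ∀ i, y i ∈ Ioo 0 1) (hinj : Injective y) :
    y ∈ orderSimplex (Tuple.sort y).symm :=
  ⟨hy, by simpa using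
    (Tuple.monotone_sort y).strictMono_of_injective (hinj.comp (Tuple.sort y).injective)⟩

theorem pairwise_disjoint_orderSimplex : Pairwise (Disjoint on orderSimplex (m := m)) := by
  refine fun v w hvw => Set.disjoint_left.2 fun y hv hw => hvw ?_
  exact symm_bijective.injective
    ((symm_eq_sort_of_mem_orderSimplex hv).trans (symm_eq_sort_of_mem_orderSimplex hw).symm)

theorem measurableSet_orderSimplex (v : Perm (Fin m)) : MeasurableSet (orderSimplex v) := by
  have : orderSimplex v = (univ.pi fun _ => Ioo 0 1) ∩
      ⋂ (a) (b) (_ : a < b), {y : Fin m → ℝ | y (v.symm a) < y (v.symm b)} := by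
    ext y; simp [orderSimplex, StrictMono]
  rw [this]
  exact (MeasurableSet.univ_pi fun _ => measurableSet_Ioo).inter <| .iInter fun _ => .iInter
    fun _ => .iInter fun _ => measurableSet_lt (measurable_pi_apply _) (measurable_pi_apply _)

theorem orderSimplex_eq_preimage (v : Perm (Fin m)) :
    orderSimplex v = MeasurableEquiv.piCongrLeft (fun _ => ℝ) v ⁻¹' orderSimplex 1 := by
  have hcomp (y : Fin m → ℝ) : MeasurableEquiv.piCongrLeft (fun _ => ℝ) v y = y ∘ v.symm := by
    ext i; simp [MeasurableEquiv.coe_piCongrLeft, Equiv.piCongrLeft_apply]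
  ext y
  simp only [orderSimplex, Set.mem_preimage, hcomp]
  exact and_congr v.symm.forall_congr_right.symm Iff.rfl

theorem volume_orderSimplex_eq (v : Perm (Fin m)) :
    volume (orderSimplex v) = volume (orderSimplex (1 : Perm (Fin m))) := by
  rw [orderSimplex_eq_preimage v]
  exact (volume_measurePreserving_piCongrLeft _ v).measure_preimage
    (measurableSet_orderSimplex 1).nullMeasurableSet

theorem volume_not_injective : volume {y : Fin m → ℝ | ¬ Injective y} = 0 := by
  have hsub : {y : Fin m → ℝ | ¬ Injective y} ⊆ ⋃ (a) (b) (_ : a ≠ b),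
      ((LinearMap.proj a : (Fin m → ℝ) →ₗ[ℝ] ℝ) - (LinearMap.proj b : (Fin m → ℝ) →ₗ[ℝ] ℝ)) ⁻¹'
        {0} := by
    intro y hy
    obtain ⟨a, b, hab, hne⟩ := not_injective_iff.1 hy
    exact mem_iUnion₂.2 ⟨a, b, mem_iUnion.2 ⟨hne, by simp [hab]⟩⟩
  refine measure_mono_null hsub <| measure_iUnion_null fun a => measure_iUnion_null fun b =>
    measure_iUnion_null fun hab =>
      Measure.addHaar_preimage_dual_countable _ ?_ (countable_singleton 0)
  intro h
  simpa [hab] using LinearMap.congr_fun h (Pi.single a 1)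

theorem volume_orderSimplex (v : Perm (Fin m)) : volume (orderSimplex v) = (m ! : ℝ≥0∞)⁻¹ := by
  set U := ⋃ w ∈ (Finset.univ : Finset (Perm (Fin m))), orderSimplex w
  have hcover : univ.pi (fun _ => Ioo (0 : ℝ) 1) ⊆ U ∪ {y | ¬ Injective y} := by
    intro y hy
    by_cases hinj : Injective y
    · exact Or.inl <| mem_iUnion₂.2
        ⟨_, Finset.mem_univ _, mem_orderSimplex_sort (fun i => hy i trivial) hinj⟩
    · exact Or.inr hinj
  have hU : volume U = 1 := by
    rw [← measure_eq_of_subset_of_subset_union_null (iUnion₂_subset fun w _ y hy i _ => hy.1 i)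
      hcover volume_not_injective]
    simp [volume_pi_pi]
  rw [measure_biUnion_finset (fun v _ w _ h => pairwise_disjoint_orderSimplex h)
    (fun w _ => measurableSet_orderSimplex w)] at hU
  simp only [volume_orderSimplex_eq, Finset.sum_const, Finset.card_univ, Fintype.card_perm,
    Fintype.card_fin, nsmul_eq_mul] at hU
  rw [volume_orderSimplex_eq]
  exact ENNReal.eq_inv_of_mul_eq_one_left (by rw [mul_comm]; exact hU)

noncomputable def descentIndicator (w : Fin (m + 1) → ℝ) : Fin m → ℝ :=
  fun i => if w i.succ < w i.castSucc then 1 else 0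

/-- Entry `i` is `1` iff `v i < v (i - 1)`: the `0` put in front of the values `v j + 1 > 0`
never starts a descent. -/
noncomputable def descentVector (v : Perm (Fin m)) : Fin m → ℝ :=
  descentIndicator (Fin.cons 0 fun i => (v i : ℝ) + 1)

theorem descentIndicator_cons_congr {y z : Fin m → ℝ} (hy : ∀ i, 0 < y i) (hz : ∀ i, 0 < z i)
    (h : ∀ i j, y i < y j ↔ z i < z j) :
    descentIndicator (Fin.cons 0 y) = descentIndicator (Fin.cons 0 z) := by
  have key (a b : Fin (m + 1)) :
      (Fin.cons 0 y : Fin (m + 1) → ℝ) a < (Fin.cons 0 y : Fin (m + 1) → ℝ) b ↔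
        (Fin.cons 0 z : Fin (m + 1) → ℝ) a < (Fin.cons 0 z : Fin (m + 1) → ℝ) b := by
    have hy' (i : Fin m) : ¬ y i < 0 := (hy i).not_gt
    have hz' (i : Fin m) : ¬ z i < 0 := (hz i).not_gt
    cases a using Fin.cases <;> cases b using Fin.cases <;> simp [hy, hz, hy', hz', h]
  ext i
  simp only [descentIndicator, key]

theorem descentIndicator_cons_of_mem_orderSimplex {v : Perm (Fin m)} {y : Fin m → ℝ}
    (hy : y ∈ orderSimplex v) : descentIndicator (Fin.cons 0 y) = descentVector v :=
  descentIndicator_cons_congr (fun i => (hy.1 i).1) (fun i => by positivity)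
    fun i j => by simp only [lt_iff_of_mem_orderSimplex hy, add_lt_add_iff_right, Nat.cast_lt,
      Fin.val_fin_lt]

theorem numDescents_succ {p : ℕ} (v : Perm (Fin (p + 1))) :
    numDescents v = (Finset.univ.filter fun j : Fin p => v j.succ < v j.castSucc).card := by
  simp only [numDescents, Finset.card_filter, Fin.sum_univ_castSucc, Fin.val_last,
    lt_self_iff_false, false_and, if_false, add_zero]
  refine Finset.sum_congr rfl fun i _ => ?_
  have hsucc : (⟨((i : ℕ) + 1) % (p + 1), Nat.mod_lt _ (by omega)⟩ : Fin (p + 1)) = i.succ :=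
    Fin.ext (Nat.mod_eq_of_lt (by simp))
  simp [hsucc]

theorem sum_descentVector (v : Perm (Fin m)) : ∑ i, descentVector v i = numDescents v := by
  cases m with
  | zero => simp [numDescents]
  | succ p =>
    rw [numDescents_succ, Fin.sum_univ_succ]
    simp [descentVector, descentIndicator, Finset.sum_boole]
    positivity

theorem partialSum_descentIndicator_mem_range (w : Fin (m + 1) → ℝ) (i : Fin (m + 1)) :
    Fin.partialSum (descentIndicator w) i ∈ range ((↑) : ℤ → ℝ) := by
  refine Fin.partialSum_mem (S := AddMonoidHom.mrange (Int.castAddHom ℝ)) (fun j => ?_) i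
  unfold descentIndicator
  split_ifs
  exacts [⟨1, by simp⟩, ⟨0, by simp⟩]

def cumSum : (Fin m → ℝ) →ₗ[ℝ] (Fin m → ℝ) :=
  LinearMap.funLeft ℝ ℝ Fin.succ ∘ₗ Fin.partialSumₗ ℝ ℝ

theorem cumSum_apply (x : Fin m → ℝ) (i : Fin m) : cumSum x i = Fin.partialSum x i.succ := rfl

theorem partialSum_eq_cons_cumSum (x : Fin m → ℝ) :
    Fin.partialSum x = Fin.cons 0 (cumSum x) := by
  ext i
  cases i using Fin.cases <;> simp [cumSum_apply]

theorem det_cumSum : LinearMap.det (cumSum : (Fin m → ℝ) →ₗ[ℝ] (Fin m → ℝ)) = 1 := by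
  rw [← LinearMap.det_toMatrix', Matrix.det_of_isLowerTriangular]
  · simp [LinearMap.toMatrix'_apply, cumSum_apply, Fin.partialSum_single]
  · intro i j hij
    simpa [LinearMap.toMatrix'_apply, cumSum_apply, Fin.partialSum_single,
      Fin.castSucc_lt_succ_iff] using hij

/-- Stanley's piece of the cube attached to `v`: the image of `orderSimplex v` under
`y ↦ Δy + descentVector v`, where the difference operator `Δ` is the inverse of `cumSum`. -/
noncomputable def stanleyPiece (v : Perm (Fin m)) : Set (Fin m → ℝ) :=
  {x | cumSum (x - descentVector v) ∈ orderSimplex v}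

theorem measurableSet_stanleyPiece (v : Perm (Fin m)) : MeasurableSet (stanleyPiece v) :=
  (measurableSet_orderSimplex v).preimage <|
    cumSum.continuous_of_finiteDimensional.measurable.comp (measurable_id.sub_const _)

theorem volume_stanleyPiece (v : Perm (Fin m)) :
    volume (stanleyPiece v) = volume (orderSimplex v) := by
  have : stanleyPiece v = (· + -descentVector v) ⁻¹' (cumSum ⁻¹' orderSimplex v) := by
    ext x; simp [stanleyPiece, sub_eq_add_neg]
  rw [this, measure_preimage_add_right, Measure.addHaar_preimage_linearMap _ (by simp [det_cumSum]),
    det_cumSum]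
  simp

theorem pairwise_disjoint_stanleyPiece : Pairwise (Disjoint on stanleyPiece (m := m)) := by
  refine fun v w hvw => Set.disjoint_left.2 fun x hv hw => ?_
  suffices cumSum (x - descentVector v) = cumSum (x - descentVector w) from
    Set.disjoint_left.1 (pairwise_disjoint_orderSimplex hvw) hv (this ▸ hw)
  -- both sides lie in `(0, 1)ᵐ` and differ by the integer vector `cumSum (d_w - d_v)`
  ext i
  obtain ⟨a, ha⟩ := partialSum_descentIndicator_mem_range (Fin.cons 0 fun i => (v i : ℝ) + 1) i.succ
  obtain ⟨b, hb⟩ := partialSum_descentIndicator_mem_range (Fin.cons 0 fun i => (w i : ℝ) + 1) i.succ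
  have hv01 := hv.1 i
  have hw01 := hw.1 i
  rw [← Int.fract_eq_self.2 ⟨hv01.1.le, hv01.2⟩, ← Int.fract_eq_self.2 ⟨hw01.1.le, hw01.2⟩]
  refine Int.fract_eq_fract.2 ⟨b - a, ?_⟩
  rw [map_sub, map_sub]
  simp only [Pi.sub_apply, cumSum_apply, descentVector, ← ha, ← hb]
  push_cast
  ring

theorem mem_stanleyPiece_bounds {v : Perm (Fin m)} {x : Fin m → ℝ} (hx : x ∈ stanleyPiece v) :
    (∀ i, x i ∈ Ico 0 1) ∧ (numDescents v : ℝ) ≤ ∑ i, x i ∧ ∑ i, x i < numDescents v + 1 := by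
  set ŷ := Fin.partialSum (x - descentVector v)
  have hŷ : ŷ = Fin.cons 0 (cumSum (x - descentVector v)) := partialSum_eq_cons_cumSum _
  have hŷ01 (j : Fin (m + 1)) : ŷ j ∈ Ico 0 1 := by
    rw [hŷ]
    cases j using Fin.cases with
    | zero => simp
    | succ j => exact Ioo_subset_Ico_self (hx.1 j)
  have hd : descentVector v = descentIndicator ŷ := by
    rw [hŷ, descentIndicator_cons_of_mem_orderSimplex hx]
  have hxi (i : Fin m) : x i = Int.fract (ŷ i.succ - ŷ i.castSucc) := by
    have hstep : ŷ i.succ = ŷ i.castSucc + (x - descentVector v) i := Fin.partialSum_succ _ i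
    rw [Int.fract_sub_of_mem_Ico (hŷ01 _) (hŷ01 _)]
    rw [hd, Pi.sub_apply, descentIndicator] at hstep
    linarith
  have hsum : ∑ i, x i = ŷ (Fin.last m) + numDescents v := by
    simp only [ŷ, Fin.partialSum_last, Pi.sub_apply, Finset.sum_sub_distrib, sum_descentVector,
      sub_add_cancel]
  refine ⟨fun i => hxi i ▸ ⟨Int.fract_nonneg _, Int.fract_lt_one _⟩, ?_, ?_⟩ <;>
    linarith [(hŷ01 (Fin.last m)).1, (hŷ01 (Fin.last m)).2]

theorem exists_mem_stanleyPiece {x : Fin m → ℝ} (hx : ∀ i, x i ∈ Icc 0 1)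
    (hgen : Injective fun j => Int.fract (Fin.partialSum x j)) :
    ∃ v, x ∈ stanleyPiece v := by
  set s := Fin.partialSum x
  set y : Fin m → ℝ := fun i => Int.fract (s i.succ)
  have hy01 (i : Fin m) : y i ∈ Ioo 0 1 := by
    refine ⟨(Int.fract_nonneg _).lt_of_ne fun h => Fin.succ_ne_zero i (hgen ?_), Int.fract_lt_one _⟩
    simp [s, ← h]
  have hyO := mem_orderSimplex_sort hy01 (hgen.comp (Fin.succ_injective _))
  refine ⟨(Tuple.sort y).symm, ?_⟩
  show cumSum (x - descentVector _) ∈ orderSimplex _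
  suffices hfloor : Fin.partialSum (descentVector (Tuple.sort y).symm) = fun j => (⌊s j⌋ : ℝ) by
    convert hyO using 1
    ext i
    rw [map_sub, Pi.sub_apply, cumSum_apply, cumSum_apply, hfloor, Int.self_sub_floor]
  have hcons : (Fin.cons 0 y : Fin (m + 1) → ℝ) = fun j => Int.fract (s j) := by
    ext j; cases j using Fin.cases <;> simp [s, y]
  rw [← descentIndicator_cons_of_mem_orderSimplex hyO, hcons,
    ← Fin.partialSum_succ_sub_castSucc (fun j => (⌊s j⌋ : ℝ)) (by simp [s])]
  congr 1
  ext i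
  have hxi : s i.succ = s i.castSucc + x i := Fin.partialSum_succ x i
  rw [descentIndicator, ← Int.cast_sub, Int.floor_sub_floor_eq_ite (by linarith [(hx i).1])
    (by linarith [(hx i).2]) (hgen.ne (Fin.castSucc_lt_succ (i := i)).ne)]

theorem volume_not_injective_fract_partialSum :
    volume {x : Fin m → ℝ | ¬ Injective fun j => Int.fract (Fin.partialSum x j)} = 0 := by
  set ℓ : Fin (m + 1) → (Fin m → ℝ) →ₗ[ℝ] ℝ := fun j => LinearMap.proj j ∘ₗ Fin.partialSumₗ ℝ ℝ
  have hsub : {x : Fin m → ℝ | ¬ Injective fun j => Int.fract (Fin.partialSum x j)} ⊆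
      ⋃ (a) (b) (_ : a ≠ b), (ℓ a - ℓ b) ⁻¹' range ((↑) : ℤ → ℝ) := by
    intro x hx
    obtain ⟨a, b, hab, hne⟩ := not_injective_iff.1 hx
    obtain ⟨z, hz⟩ := Int.fract_eq_fract.1 hab
    exact mem_iUnion₂.2 ⟨a, b, mem_iUnion.2 ⟨hne, z, hz.symm⟩⟩
  refine measure_mono_null hsub <| measure_iUnion_null fun a => measure_iUnion_null fun b =>
    measure_iUnion_null fun hab =>
      Measure.addHaar_preimage_dual_countable _ ?_ (countable_range _)
  intro h
  have := LinearMap.congr_fun h fun _ => 1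
  simp [ℓ, Fin.partialSum_const_one, sub_eq_zero] at this
  exact hab (Fin.ext this)

def hypersimplex (m k : ℕ) : Set (Fin m → ℝ) :=
  {x | (∀ i, 0 ≤ x i ∧ x i ≤ 1) ∧ (k - 1 : ℝ) ≤ ∑ i, x i ∧ ∑ i, x i ≤ (k : ℝ)}

theorem stanleyPiece_subset_hypersimplex {k : ℕ} (hk : 0 < k) {v : Perm (Fin m)}
    (hv : numDescents v = k - 1) : stanleyPiece v ⊆ hypersimplex m k := by
  intro x hx
  obtain ⟨hcube, hlow, hhigh⟩ := mem_stanleyPiece_bounds hx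
  rw [hv, Nat.cast_pred hk] at hlow hhigh
  exact ⟨fun i => ⟨(hcube i).1, (hcube i).2.le⟩, hlow, by linarith⟩

theorem hypersimplex_subset (hm : 0 < m) (k : ℕ) :
    hypersimplex m k ⊆ (⋃ v ∈ Finset.univ.filter (numDescents · = k - 1), stanleyPiece v) ∪
      {x | ¬ Injective fun j => Int.fract (Fin.partialSum x j)} := by
  rintro x ⟨hcube, hlow, hhigh⟩
  by_cases hgen : Injective fun j => Int.fract (Fin.partialSum x j)
  · obtain ⟨v, hv⟩ := exists_mem_stanleyPiece hcube hgen
    have hne : ∑ i, x i ≠ k := by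
      intro h
      have := hgen.ne (a₁ := Fin.last m) (a₂ := 0) fun h0 => by simp [Fin.ext_iff] at h0; omega
      simp [Fin.partialSum_last, h] at this
    obtain ⟨-, hvlow, hvhigh⟩ := mem_stanleyPiece_bounds hv
    have h1 : numDescents v < k := by exact_mod_cast hvlow.trans_lt (hhigh.lt_of_ne hne)
    have h2 : k < numDescents v + 2 := by exact_mod_cast (by linarith : (k : ℝ) < numDescents v + 2)
    exact Or.inl (mem_iUnion₂.2 ⟨v, by simp; omega, hv⟩)
  · exact Or.inr hgen

theorem factorial_mul_volume_hypersimplex (hm : 0 < m) {k : ℕ} (hk : 0 < k) :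
    (m ! : ℝ≥0∞) * volume (hypersimplex m k) =
      (Finset.univ.filter fun v : Perm (Fin m) => numDescents v = k - 1).card := by
  set G := Finset.univ.filter fun v : Perm (Fin m) => numDescents v = k - 1
  have hG : volume (hypersimplex m k) = volume (⋃ v ∈ G, stanleyPiece v) :=
    measure_eq_of_subset_of_subset_union_null
      (iUnion₂_subset fun v hv => stanleyPiece_subset_hypersimplex hk (Finset.mem_filter.1 hv).2)
      (hypersimplex_subset hm k) volume_not_injective_fract_partialSum
  rw [hG, measure_biUnion_finset (fun v _ w _ h => pairwise_disjoint_stanleyPiece h)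
    (fun v _ => measurableSet_stanleyPiece v)]
  simp only [volume_stanleyPiece, volume_orderSimplex, Finset.sum_const, nsmul_eq_mul]
  rw [mul_left_comm, ENNReal.mul_inv_cancel (by positivity) (ENNReal.natCast_ne_top _), mul_one]

end Hypersimplex

/-- The normalized volume of the hypersimplex `Δ_{k,n}` equals the Eulerian number
`A_{k,n-1}`, the number of permutations of `[n-1]` with exactly `k-1` descents. -/
theorem hypersimplex_volume_eq_eulerian (n k : ℕ) (hk : 0 < k) (hkn : k < n) :
    (Nat.factorial (n - 1) : ENNReal) *
      volume {x : Fin (n - 1) → ℝ |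
        (∀ i, 0 ≤ x i ∧ x i ≤ 1) ∧ (k - 1 : ℝ) ≤ ∑ i, x i ∧ ∑ i, x i ≤ (k : ℝ)} =
    ((Finset.univ.filter
        (fun w : Equiv.Perm (Fin (n - 1)) => numDescents w = k - 1)).card : ENNReal) :=
  Hypersimplex.factorial_mul_volume_hypersimplex (by omega) hk
end

section
/- Let ψ: [0,1]^{n-1} → [0,1]^{n-1} be defined by ψ(x_1,…,x_{n-1}) = (y_1,…,y_{n-1}) where y_i = (x_1+⋯+x_i) - ⌊x_1+⋯+x_i⌋. If ψ(x) lies in the open simplex ∇_w = {0 < y_{w(1)} < ⋯ < y_{w(n-1)} < 1} for some permutation w of {1,…,n-1}, then ⌊x_1+⋯+x_{n-1}⌋ equals the number of descents of w^{-1}. -/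
/-
The partial sums `s k = x₀ + ⋯ + x_{k-1}` grow by steps in `[0, 1]`, so `⌊s⌋` goes up by one
exactly at the steps where the fractional part wraps around, `fract (s (k+1)) < fract (s k)`;
the hypothesis `ψ(x) ∈ ∇_w` makes these fractional parts nonzero and distinct, which rules out
the ambiguous steps of length `0` or `1`. As `y_i = fract (s (i+1))` and `y ∘ w` is increasing,
a wrap between `y_i` and `y_{i+1}` is exactly a descent of `w⁻¹` at `i`.
-/

open Finset

section FloorRing

variable {R : Type*} [CommRing R] [LinearOrder R] [IsStrictOrderedRing R] [FloorRing R]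

theorem floor_add_eq_ite_of_fract_ne {a b : R} (hb₀ : 0 ≤ b) (hb₁ : b ≤ 1)
    (hne : Int.fract (a + b) ≠ Int.fract a) :
    ⌊a + b⌋ = ⌊a⌋ + if Int.fract (a + b) < Int.fract a then 1 else 0 := by
  obtain ⟨d, hd_def⟩ : ∃ d, d = ⌊a + b⌋ - ⌊a⌋ := ⟨_, rfl⟩
  have hd : (d : R) = Int.fract a + b - Int.fract (a + b) := by
    rw [hd_def]
    push_cast
    linarith [Int.floor_add_fract a, Int.floor_add_fract (a + b)]
  have := Int.fract_nonneg a
  have := Int.fract_lt_one a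
  have := Int.fract_nonneg (a + b)
  have := Int.fract_lt_one (a + b)
  suffices d = if Int.fract (a + b) < Int.fract a then 1 else 0 by omega
  split_ifs with hlt
  · have hpos : (0 : R) < d := by linarith
    have hlt2 : (d : R) < 2 := by linarith
    have : 0 < d := by exact_mod_cast hpos
    have : d < 2 := by exact_mod_cast hlt2
    omega
  · have hgt : Int.fract a < Int.fract (a + b) := lt_of_le_of_ne (not_lt.1 hlt) hne.symm
    have hneg : (-1 : R) < d := by linarith
    have hlt1 : (d : R) < 1 := by linarith
    have : -1 < d := by exact_mod_cast hneg
    have : d < 1 := by exact_mod_cast hlt1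
    omega

theorem floor_eq_floor_add_card_fract_descents {s : ℕ → R} {m : ℕ}
    (hmono : ∀ k < m, s k ≤ s (k + 1)) (hstep : ∀ k < m, s (k + 1) ≤ s k + 1)
    (hne : ∀ k < m, Int.fract (s (k + 1)) ≠ Int.fract (s k)) :
    ⌊s m⌋ = ⌊s 0⌋ + #{k ∈ range m | Int.fract (s (k + 1)) < Int.fract (s k)} := by
  induction m with
  | zero => simp
  | succ m ih =>
    have hsucc : s (m + 1) = s m + (s (m + 1) - s m) := by ring
    rw [card_filter, sum_range_succ, ← card_filter, hsucc,
      floor_add_eq_ite_of_fract_ne (sub_nonneg.2 (hmono m m.lt_add_one))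
        (by linarith [hstep m m.lt_add_one]) (by rw [← hsucc]; exact hne m m.lt_add_one),
      ih (fun k hk => hmono k (by omega)) (fun k hk => hstep k (by omega))
        (fun k hk => hne k (by omega)), ← hsucc]
    push_cast
    ring

end FloorRing

section PartialSum

variable {M : Type*} [AddCommMonoid M] {m : ℕ} (x : Fin m → M)

def partialSum (k : ℕ) : M :=
  ∑ j ∈ univ.filter (fun j : Fin m => (j : ℕ) < k), x j

theorem partialSum_zero : partialSum x 0 = 0 := by
  simp [partialSum]

theorem partialSum_self : partialSum x m = ∑ j, x j := by
  simp [partialSum]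

theorem partialSum_succ {k : ℕ} (hk : k < m) :
    partialSum x (k + 1) = partialSum x k + x ⟨k, hk⟩ := by
  have hset : univ.filter (fun j : Fin m => (j : ℕ) < k + 1)
      = insert ⟨k, hk⟩ (univ.filter (fun j : Fin m => (j : ℕ) < k)) := by
    ext j
    simp only [mem_filter, mem_univ, true_and, mem_insert, Fin.ext_iff]
    omega
  rw [partialSum, hset, sum_insert (by simp), add_comm]
  rfl

theorem sum_filter_le_eq_partialSum (i : Fin m) :
    ∑ j ∈ univ.filter (fun j : Fin m => j ≤ i), x j = partialSum x (i + 1) := by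
  rw [partialSum]
  congr 1
  exact filter_congr fun j _ => by rw [Fin.le_def, Nat.lt_succ_iff]

end PartialSum

theorem numDescents_eq_card_range_filter {m : ℕ} (w : Equiv.Perm (Fin m)) {p : ℕ → Prop}
    [DecidablePred p] (hp₀ : ¬ p 0)
    (hp : ∀ i (h : i + 1 < m), p (i + 1) ↔ w ⟨i + 1, h⟩ < w ⟨i, by omega⟩) :
    numDescents w = #{k ∈ range m | p k} := by
  refine card_bij (fun i _ => i.val + 1) ?_ (fun i _ j _ h => Fin.ext (by omega)) ?_
  · intro i hi
    simp only [mem_filter, mem_univ, true_and] at hi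
    obtain ⟨hlt, hdesc⟩ := hi
    simp only [mem_filter, mem_range]
    refine ⟨hlt, (hp i hlt).2 ?_⟩
    simpa only [Nat.mod_eq_of_lt hlt] using hdesc
  · intro k hk
    simp only [mem_filter, mem_range] at hk
    obtain ⟨hkm, hpk⟩ := hk
    obtain ⟨i, rfl⟩ : ∃ i, k = i + 1 :=
      Nat.exists_eq_succ_of_ne_zero (by rintro rfl; exact hp₀ hpk)
    refine ⟨⟨i, by omega⟩, ?_, rfl⟩
    simp only [mem_filter, mem_univ, true_and]
    refine ⟨hkm, ?_⟩
    simpa only [Nat.mod_eq_of_lt hkm] using (hp i hkm).1 hpk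

/-- If `ψ(x) = y` with `y_i = fract(x_1 + ⋯ + x_i)` lies in the open simplex
`∇_w = {0 < y_{w(1)} < ⋯ < y_{w(n-1)} < 1}`, then `⌊x_1 + ⋯ + x_{n-1}⌋` equals the
number of descents of `w⁻¹`. -/
theorem floor_sum_eq_descents_of_inv (n : ℕ) (x : Fin (n - 1) → ℝ)
    (hx : ∀ i, 0 ≤ x i ∧ x i ≤ 1) (w : Equiv.Perm (Fin (n - 1)))
    (y : Fin (n - 1) → ℝ)
    (hy : ∀ i, y i = Int.fract (∑ j ∈ Finset.univ.filter (fun j : Fin (n - 1) => j ≤ i), x j))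
    (hmem : (∀ i, 0 < y i ∧ y i < 1) ∧ ∀ i j : Fin (n - 1), i < j → y (w i) < y (w j)) :
    ⌊∑ i, x i⌋ = (numDescents w⁻¹ : ℤ) := by
  have hmono : StrictMono (y ∘ w) := fun i j hij => hmem.2 i j hij
  have hinj : Function.Injective y := (Equiv.injective_comp w y).1 hmono.injective
  have hy' (i : Fin (n - 1)) : y i = Int.fract (partialSum x (i + 1)) := by
    rw [hy, sum_filter_le_eq_partialSum]
  have hne : ∀ k < n - 1, Int.fract (partialSum x (k + 1)) ≠ Int.fract (partialSum x k) := by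
    rintro (_ | i) hk
    · rw [partialSum_zero, Int.fract_zero, ← hy' ⟨0, hk⟩]
      exact (hmem.1 _).1.ne'
    · rw [← hy' ⟨i + 1, hk⟩, ← hy' ⟨i, by omega⟩]
      exact hinj.ne (by simp [Fin.ext_iff])
  have hdrop (i : ℕ) (h : i + 1 < n - 1) :
      Int.fract (partialSum x (i + 1 + 1)) < Int.fract (partialSum x (i + 1)) ↔
        w⁻¹ ⟨i + 1, h⟩ < w⁻¹ ⟨i, by omega⟩ := by
    rw [← hy' ⟨i + 1, h⟩, ← hy' ⟨i, by omega⟩, ← hmono.lt_iff_lt]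
    simp
  calc ⌊∑ i, x i⌋ = ⌊partialSum x (n - 1)⌋ := by rw [partialSum_self]
    _ = ⌊partialSum x 0⌋ + #{k ∈ range (n - 1) |
          Int.fract (partialSum x (k + 1)) < Int.fract (partialSum x k)} :=
        floor_eq_floor_add_card_fract_descents
          (fun k hk => by rw [partialSum_succ x hk]; linarith [hx ⟨k, hk⟩])
          (fun k hk => by rw [partialSum_succ x hk]; linarith [hx ⟨k, hk⟩]) hne
    _ = numDescents w⁻¹ := by
        rw [partialSum_zero, Int.floor_zero, zero_add,
          numDescents_eq_card_range_filter w⁻¹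
            (p := fun k => Int.fract (partialSum x (k + 1)) < Int.fract (partialSum x k))
            ?_ hdrop]
        simp [partialSum_zero]
end

section
/- An ordered collection (I_1,…,I_r) of k-element subsets of [n] is sorted (every pair (I_i, I_j) with i < j is sorted) if and only if, writing I_l = {I_{l1} < ⋯ < I_{lk}}, the chain of inequalities I_{11} ≤ I_{21} ≤ ⋯ ≤ I_{r1} ≤ I_{12} ≤ I_{22} ≤ ⋯ ≤ I_{r2} ≤ ⋯ ≤ I_{rk} holds. -/
/-- The nondecreasing rearrangement of the multiset union `I ∪ J`. -/
def sortList (I J : Finset ℕ) : List ℕ := Multiset.sort (I.val + J.val) (· ≤ ·)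

/-- `U(I,J)`: the odd-position (1st, 3rd, …) entries of `sort(I ∪ J)`. -/
def sortU (I J : Finset ℕ) : Finset ℕ :=
  (((List.range (sortList I J).length).filter (fun t => t % 2 = 0)).map
    (fun t => (sortList I J).getD t 0)).toFinset

/-- `V(I,J)`: the even-position (2nd, 4th, …) entries of `sort(I ∪ J)`. -/
def sortV (I J : Finset ℕ) : Finset ℕ :=
  (((List.range (sortList I J).length).filter (fun t => t % 2 = 1)).map
    (fun t => (sortList I J).getD t 0)).toFinset

/-- Interleaving condition `i_1 ≤ j_1 ≤ i_2 ≤ j_2 ≤ ⋯ ≤ i_k ≤ j_k` for two finite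
sets of the same cardinality, via their increasing enumerations. -/
def Interleaved (A B : Finset ℕ) : Prop :=
  A.card = B.card ∧
  (∀ t, t < A.card → (A.sort (· ≤ ·)).getD t 0 ≤ (B.sort (· ≤ ·)).getD t 0) ∧
  (∀ t, t + 1 < A.card → (B.sort (· ≤ ·)).getD t 0 ≤ (A.sort (· ≤ ·)).getD (t + 1) 0)

/-!
Write `I_l(t)` for the `t`-th smallest element of `I_l`. The chain says that each column is
nondecreasing, `I_1(t) ≤ ⋯ ≤ I_r(t)`, and that column `t` ends below where column `t + 1`
starts, `I_r(t) ≤ I_1(t + 1)`. For `l < l'` the interleaving `I_{l'}(t) ≤ I_l(t + 1)` then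
follows from `I_{l'}(t) ≤ I_r(t) ≤ I_1(t + 1) ≤ I_l(t + 1)`; conversely the wrap-around
inequality is the interleaving of the pair `(I_1, I_r)`, or, when `r = 1`, the monotonicity of
the enumeration.
-/
theorem Finset.getD_sort_le_getD_sort {α : Type*} [LinearOrder α] (A : Finset α) (d : α)
    {s t : ℕ} (hst : s ≤ t) (ht : t < A.card) :
    (A.sort (· ≤ ·)).getD s d ≤ (A.sort (· ≤ ·)).getD t d := by
  have hlen : (A.sort (· ≤ ·)).length = A.card := A.length_sort _
  rw [List.getD_eq_getElem _ _ (by omega), List.getD_eq_getElem _ _ (by omega)]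
  exact (A.pairwise_sort (· ≤ ·)).rel_get_of_le (by simpa using hst)

theorem interleaved_of_chain {k r : ℕ} (hr : 0 < r) {I : Fin r → Finset ℕ}
    (hI : ∀ l, (I l).card = k)
    (hcol : ∀ t, t < k → ∀ l l' : Fin r, l ≤ l' →
      ((I l).sort (· ≤ ·)).getD t 0 ≤ ((I l').sort (· ≤ ·)).getD t 0)
    (hwrap : ∀ t, t + 1 < k →
      ((I ⟨r - 1, Nat.sub_one_lt_of_lt hr⟩).sort (· ≤ ·)).getD t 0 ≤
        ((I ⟨0, hr⟩).sort (· ≤ ·)).getD (t + 1) 0)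
    {l l' : Fin r} (hll' : l < l') : Interleaved (I l) (I l') := by
  refine ⟨by rw [hI, hI], fun t ht => hcol t (by rwa [hI l] at ht) l l' hll'.le,
    fun t ht => ?_⟩
  rw [hI l] at ht
  calc ((I l').sort (· ≤ ·)).getD t 0
      ≤ ((I ⟨r - 1, Nat.sub_one_lt_of_lt hr⟩).sort (· ≤ ·)).getD t 0 :=
        hcol t (by omega) l' _ (Fin.mk_le_mk.mpr (by omega))
    _ ≤ ((I ⟨0, hr⟩).sort (· ≤ ·)).getD (t + 1) 0 := hwrap t ht
    _ ≤ ((I l).sort (· ≤ ·)).getD (t + 1) 0 :=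
        hcol (t + 1) ht _ l (Fin.mk_le_mk.mpr (by omega))

theorem sorted_collection_iff_chain (k r : ℕ) (hr : 0 < r) (I : Fin r → Finset ℕ)
    (hI : ∀ l, (I l).card = k) :
    (∀ l l' : Fin r, l < l' → Interleaved (I l) (I l')) ↔
      ((∀ t, t < k → ∀ l l' : Fin r, l ≤ l' →
          ((I l).sort (· ≤ ·)).getD t 0 ≤ ((I l').sort (· ≤ ·)).getD t 0) ∧
       (∀ t, t + 1 < k →
          ((I ⟨r - 1, by omega⟩).sort (· ≤ ·)).getD t 0 ≤
            ((I ⟨0, hr⟩).sort (· ≤ ·)).getD (t + 1) 0)) := by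
  refine ⟨fun h => ⟨fun t ht l l' hll' => ?_, fun t ht => ?_⟩,
    fun ⟨hcol, hwrap⟩ _ _ => interleaved_of_chain hr hI hcol hwrap⟩
  · rcases hll'.lt_or_eq with hlt | rfl
    · exact (h l l' hlt).2.1 t (by rwa [hI])
    · exact le_rfl
  · have hfirst_le_last : (⟨0, hr⟩ : Fin r) ≤ ⟨r - 1, by omega⟩ :=
      Fin.mk_le_mk.mpr (by omega)
    rcases hfirst_le_last.lt_or_eq with hlt | heq
    · exact (h _ _ hlt).2.2 t (by rwa [hI])
    · rw [← heq]
      exact Finset.getD_sort_le_getD_sort _ _ t.le_succ (by rwa [hI])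
end

section
/- A permutation w ∈ S_n with w_n = n corresponds to a minimal circuit in the graph G_{k,n} if and only if the inverse permutation w^{-1} has exactly k-1 descents. Moreover, a minimal circuit is uniquely determined by its label sequence w modulo cyclic shifts. -/
/-- An edge of the graph `G_{k,n}`: the 0-1 vector `ε'` is obtained from `ε` by cyclically
shifting the `1` in position `i` one step to the right (position `i+1` must hold a `0`). -/
def cyclicSucc {n : ℕ} (i : Fin n) : Fin n := ⟨((i : ℕ) + 1) % n, Nat.mod_lt _ i.pos⟩

def IsStep (n : ℕ) (ε ε' : Fin n → Bool) (i : Fin n) : Prop :=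
  ε i = true ∧ ε (cyclicSucc i) = false ∧
  ε' = Function.update (Function.update ε i false) (cyclicSucc i) true

/-- A minimal circuit in `G_{k,n}` whose sequence of edge labels is `w 0, w 1, …, w (n-1)`:
a closed walk of length `n` through 0-1 vectors with exactly `k` ones, in which the step
at time `t` moves a `1` from position `w t` to position `w t + 1` (cyclically). -/
def IsCircuit (n k : ℕ) (w : Equiv.Perm (Fin n)) (v : Fin (n + 1) → Fin n → Bool) : Prop :=
  v (Fin.last n) = v 0 ∧
  (Finset.univ.filter (fun i => v 0 i = true)).card = k ∧
  ∀ t : Fin n, IsStep n (v t.castSucc) (v t.succ) (w t)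


/-! In a minimal circuit with labels `w`, position `i` is vacated exactly once, at time `w⁻¹ i`,
and filled exactly once, at time `w⁻¹ (i - 1)`, and it does not change at any other time. So the
circuit is forced: `i` initially holds a `1` iff it is vacated before it is filled, i.e. iff
`i - 1` is a cyclic descent of `w⁻¹`; conversely these initial values do produce a circuit.
As `w⁻¹` fixes the last position, that position is always a cyclic descent, so the circuit has
one more `1` than `w⁻¹` has descents. -/

open Finset Equiv Function

variable {n : ℕ}

lemma IsStep.right_unique {ε ε₁ ε₂ : Fin n → Bool} {i : Fin n} (h₁ : IsStep n ε ε₁ i)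
    (h₂ : IsStep n ε ε₂ i) : ε₁ = ε₂ :=
  h₁.2.2.trans h₂.2.2.symm

lemma cyclicSucc_eq_add_one [NeZero n] (i : Fin n) : cyclicSucc i = i + 1 := by
  ext
  simp [cyclicSucc, Fin.val_add, Nat.add_mod]

lemma isStep_iff [NeZero n] {ε ε' : Fin n → Bool} {i : Fin n} :
    IsStep n ε ε' i ↔
      ε i = true ∧ ε (i + 1) = false ∧ ε' = update (update ε i false) (i + 1) true := by
  rw [IsStep, cyclicSucc_eq_add_one]

lemma Fin.add_one_ne_self [NeZero n] (hn : 1 < n) (i : Fin n) : i + 1 ≠ i := by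
  rw [Ne, add_eq_left, Fin.one_eq_zero_iff]
  omega

lemma card_cyclicDescents {m : ℕ} (hm : 0 < m) (σ : Perm (Fin (m + 1)))
    (hσ : σ (Fin.last m) = Fin.last m) :
    #{j | σ (j + 1) < σ j} = numDescents σ + 1 := by
  rw [numDescents, ← card_insert_of_notMem (a := Fin.last m) (by simp)]
  congr 1
  ext j
  simp only [mem_insert, mem_filter, mem_univ, true_and]
  rcases eq_or_ne j (Fin.last m) with rfl | hj
  · have : σ 0 ≠ σ (Fin.last m) := σ.injective.ne (Fin.ne_of_val_ne (by simp; omega))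
    simpa [Fin.last_add_one, hσ, Fin.lt_last_iff_ne_last] using this
  · rw [or_iff_right hj, and_iff_right (by simpa using Fin.val_lt_last hj),
      ← cyclicSucc_eq_add_one]
    rfl

namespace MinimalCircuit

def departure (w : Perm (Fin n)) (i : Fin n) : ℕ := w⁻¹ i

lemma departure_lt (w : Perm (Fin n)) (i : Fin n) : departure w i < n := (w⁻¹ i).isLt

lemma departure_eq_iff {w : Perm (Fin n)} {i t : Fin n} : departure w i = t ↔ i = w t :=
  Fin.val_inj.trans Perm.inv_eq_iff_eq

variable [NeZero n]

def arrival (w : Perm (Fin n)) (i : Fin n) : ℕ := w⁻¹ (i - 1)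

lemma arrival_lt (w : Perm (Fin n)) (i : Fin n) : arrival w i < n := (w⁻¹ (i - 1)).isLt

lemma arrival_eq_iff {w : Perm (Fin n)} {i t : Fin n} : arrival w i = t ↔ i = w t + 1 :=
  Fin.val_inj.trans <| Perm.inv_eq_iff_eq.trans sub_eq_iff_eq_add

lemma departure_ne_arrival (hn : 1 < n) (w : Perm (Fin n)) (i : Fin n) :
    departure w i ≠ arrival w i := by
  intro h
  have := w⁻¹.injective (Fin.val_injective h)
  exact Fin.add_one_ne_self hn (i - 1) (by rw [sub_add_cancel, ← this])

/-- The bit at `i` starts as `departure w i < arrival w i` and flips at each of these times. -/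
def canonicalState (w : Perm (Fin n)) (t : ℕ) (i : Fin n) : Bool :=
  decide ((departure w i < arrival w i) ↔ ((departure w i < t) ↔ (arrival w i < t)))

def canonicalCircuit (w : Perm (Fin n)) (t : Fin (n + 1)) : Fin n → Bool :=
  canonicalState w t

lemma canonicalState_zero (w : Perm (Fin n)) (i : Fin n) :
    canonicalState w 0 i = decide (departure w i < arrival w i) := by
  simp [canonicalState]

lemma canonicalState_n (w : Perm (Fin n)) : canonicalState w n = canonicalState w 0 := by
  funext i
  have := departure_lt w i
  have := arrival_lt w i
  rw [canonicalState, canonicalState, decide_eq_decide]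
  omega

lemma canonicalState_succ_apply (hn : 1 < n) (w : Perm (Fin n)) (t : ℕ) (i : Fin n) :
    canonicalState w (t + 1) i =
      if arrival w i = t then true else if departure w i = t then false
      else canonicalState w t i := by
  have := departure_ne_arrival hn w i
  simp only [canonicalState]
  split_ifs <;> simp only [decide_eq_true_eq, decide_eq_false_iff_not, decide_eq_decide] <;> omega

lemma isStep_canonicalState (hn : 1 < n) (w : Perm (Fin n)) (t : Fin n) :
    IsStep n (canonicalState w t) (canonicalState w (t + 1)) (w t) := by
  have hd : departure w (w t) = t := departure_eq_iff.2 rfl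
  have ha : arrival w (w t + 1) = t := arrival_eq_iff.2 rfl
  refine isStep_iff.2 ⟨?_, ?_, ?_⟩
  · have := departure_ne_arrival hn w (w t)
    simp only [canonicalState, hd, decide_eq_true_eq]
    omega
  · have := departure_ne_arrival hn w (w t + 1)
    simp only [canonicalState, ha, decide_eq_false_iff_not]
    omega
  · funext j
    simp only [canonicalState_succ_apply hn, departure_eq_iff, arrival_eq_iff, update_apply]

lemma isCircuit_canonicalCircuit (hn : 1 < n) (w : Perm (Fin n)) :
    IsCircuit n #{i | canonicalState w 0 i} w (canonicalCircuit w) :=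
  ⟨canonicalState_n w, rfl, isStep_canonicalState hn w⟩

lemma card_canonicalState_zero (w : Perm (Fin n)) :
    #{i | canonicalState w 0 i} = #{j | w⁻¹ (j + 1) < w⁻¹ j} :=
  card_equiv (Equiv.subRight 1) fun i => by
    simp only [mem_filter, mem_univ, true_and, subRight_apply, sub_add_cancel,
      canonicalState_zero, decide_eq_true_eq, departure, arrival, Fin.val_fin_lt]

end MinimalCircuit

open MinimalCircuit

section

variable [NeZero n] {k : ℕ} {w : Perm (Fin n)} {v : Fin (n + 1) → Fin n → Bool}

lemma IsCircuit.apply_eq_apply_zero (hc : IsCircuit n k w v) {i : Fin n} {t : Fin (n + 1)}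
    (hd : t ≤ departure w i) (ha : t ≤ arrival w i) : v t i = v 0 i := by
  induction t using Fin.induction with
  | zero => rfl
  | succ t ih =>
    have hi : i ≠ w t + 1 := fun h => by simp [arrival_eq_iff.2 h] at ha
    have hi' : i ≠ w t := fun h => by simp [departure_eq_iff.2 h] at hd
    rw [(isStep_iff.1 (hc.2.2 t)).2.2, update_of_ne hi, update_of_ne hi']
    exact ih (by simp at hd ⊢; omega) (by simp at ha ⊢; omega)

lemma IsCircuit.apply_zero (hn : 1 < n) (hc : IsCircuit n k w v) (i : Fin n) :
    v 0 i = canonicalState w 0 i := by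
  rw [canonicalState_zero]
  rcases (departure_ne_arrival hn w i).lt_or_gt with h | h
  · have := (isStep_iff.1 (hc.2.2 (w⁻¹ i))).1
    simp only [Perm.coe_inv, apply_symm_apply] at this
    rw [hc.apply_eq_apply_zero le_rfl h.le] at this
    simp [this, h]
  · have := (isStep_iff.1 (hc.2.2 (w⁻¹ (i - 1)))).2.1
    simp only [Perm.coe_inv, apply_symm_apply, sub_add_cancel] at this
    rw [hc.apply_eq_apply_zero h.le le_rfl] at this
    simp [this, h.le]

lemma IsCircuit.eq_canonicalCircuit (hn : 1 < n) (hc : IsCircuit n k w v) :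
    v = canonicalCircuit w := by
  funext t
  induction t using Fin.induction with
  | zero => exact funext (hc.apply_zero hn)
  | succ t ih => exact (hc.2.2 t).right_unique (ih ▸ isStep_canonicalState hn w t)

lemma isCircuit_iff (hn : 1 < n) :
    IsCircuit n k w v ↔ v = canonicalCircuit w ∧ #{i | canonicalState w 0 i} = k := by
  refine ⟨fun hc => ⟨hc.eq_canonicalCircuit hn, ?_⟩, ?_⟩
  · rw [← hc.2.1, hc.eq_canonicalCircuit hn]
    rfl
  · rintro ⟨rfl, rfl⟩
    exact isCircuit_canonicalCircuit hn w

end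

/-- A permutation `w ∈ S_n` with `w_n = n` corresponds to a minimal circuit in `G_{k,n}`
iff `w⁻¹` has exactly `k-1` descents; moreover the minimal circuit is uniquely
determined by its label sequence `w`. -/
theorem minimal_circuit_iff_descents (n k : ℕ) (hn : 1 < n) (hk : 0 < k)
    (w : Equiv.Perm (Fin n)) (hw : w ⟨n - 1, by omega⟩ = ⟨n - 1, by omega⟩) :
    ((∃ v, IsCircuit n k w v) ↔ numDescents w⁻¹ = k - 1) ∧
    (∀ v v', IsCircuit n k w v → IsCircuit n k w v' → v = v') := by
  obtain ⟨m, rfl⟩ : ∃ m, n = m + 1 := ⟨n - 1, by omega⟩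
  have hones : #{i | canonicalState w 0 i} = numDescents w⁻¹ + 1 := by
    rw [card_canonicalState_zero,
      card_cyclicDescents (by omega) w⁻¹ (Perm.inv_eq_iff_eq.2 hw.symm)]
  simp only [isCircuit_iff hn, hones, exists_eq_left]
  exact ⟨by omega, fun v v' hv hv' => hv.1.trans hv'.1.symm⟩
end

section
/- Let Π = Π(a_1,…,a_r) be the partition of [n] into consecutive intervals of sizes a_1,…,a_r, and b, c ∈ ℕ^r. Then the matroid M_{Π,b,c,k} on [n] is sort-closed: for any two bases I, J, both U(I,J) and V(I,J) are bases. -/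
/-- The `j`-th consecutive interval of `[n]` (0-based) for interval sizes `a_1, …, a_r`. -/
def intervalPart (r : ℕ) (a : Fin r → ℕ) (j : Fin r) : Finset ℕ :=
  Finset.Ico (∑ t ∈ Finset.univ.filter (· < j), a t)
    (∑ t ∈ Finset.univ.filter (· ≤ j), a t)

/-- Bases of `M_{Π,b,c,k}` for the interval partition `Π(a_1,…,a_r)`. -/
def IntervalBase (r k : ℕ) (a : Fin r → ℕ) (b c : Fin r → ℕ) (I : Finset ℕ) : Prop :=
  I ⊆ Finset.range (∑ j, a j) ∧ I.card = k ∧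
  ∀ j, b j ≤ (I ∩ intervalPart r a j).card ∧ (I ∩ intervalPart r a j).card ≤ c j

open Finset

/-- `sortU I J` and `sortV I J` are `parityPick 0` and `parityPick 1` of `sortList I J`. -/
def parityPick (ε : ℕ) (L : List ℕ) : Finset ℕ :=
  (((List.range L.length).filter (fun t => t % 2 = ε)).map (fun t => L.getD t 0)).toFinset

section ParityPick

variable (a : ℕ) (L : List ℕ)

theorem parityPick_nil (ε : ℕ) : parityPick ε [] = ∅ := rfl

theorem parityPick_zero_cons : parityPick 0 (a :: L) = insert a (parityPick 1 L) := by
  have hpar : ∀ t, decide ((t + 1) % 2 = 0) = decide (t % 2 = 1) := by intro t; simp; omega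
  simp [parityPick, List.range_succ_eq_map, List.filter_map, Function.comp_def, hpar]

theorem parityPick_one_cons : parityPick 1 (a :: L) = parityPick 0 L := by
  have hpar : ∀ t, decide ((t + 1) % 2 = 1) = decide (t % 2 = 0) := by intro t; simp; omega
  simp [parityPick, List.range_succ_eq_map, List.filter_map, Function.comp_def, hpar]

theorem mem_of_mem_parityPick {ε v : ℕ} (hv : v ∈ parityPick ε L) : v ∈ L := by
  simp only [parityPick, List.mem_toFinset, List.mem_map, List.mem_filter, List.mem_range] at hv
  obtain ⟨t, ⟨ht, -⟩, rfl⟩ := hv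
  rw [List.getD_eq_getElem _ _ ht]
  exact List.getElem_mem ht

end ParityPick

theorem notMem_parityPick_one {a : ℕ} {L : List ℕ} (hL : (a :: L).Pairwise (· ≤ ·))
    (hc : (a :: L).count a ≤ 2) : a ∉ parityPick 1 L := by
  cases L with
  | nil => simp [parityPick_nil]
  | cons b L =>
    rw [parityPick_one_cons]
    -- otherwise `a = b` and `a` occurs three times in `a :: b :: L`
    intro ha
    have haL := mem_of_mem_parityPick L ha
    have hab : a = b := le_antisymm (List.rel_of_pairwise_cons hL (by simp))
      (List.rel_of_pairwise_cons (List.pairwise_cons.mp hL).2 haL)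
    subst hab
    have := List.count_pos_iff.mpr haL
    simp only [List.count_cons_self] at hc
    omega

theorem card_filter_lt_parityPick {L : List ℕ} (hL : L.Pairwise (· ≤ ·))
    (hc : ∀ v, L.count v ≤ 2) (y : ℕ) :
    #((parityPick 0 L).filter (· < y)) = (L.countP (· < y) + 1) / 2 ∧
      #((parityPick 1 L).filter (· < y)) = L.countP (· < y) / 2 := by
  induction L with
  | nil => simp [parityPick_nil]
  | cons a L ih =>
    have hcL : ∀ v, L.count v ≤ 2 := fun v => (List.count_le_count_cons ..).trans (hc v)
    obtain ⟨ih0, ih1⟩ := ih (List.pairwise_cons.mp hL).2 hcL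
    rw [parityPick_zero_cons, parityPick_one_cons]
    by_cases hay : a < y
    · have ha : a ∉ parityPick 1 L := notMem_parityPick_one hL (hc a)
      rw [filter_insert, if_pos hay, card_insert_of_notMem (by simp [ha]), ih1, ih0,
        List.countP_cons_of_pos (by simpa using hay)]
      omega
    · have hge : ∀ v ∈ a :: L, ¬ v < y := fun v hv => by
        rcases List.mem_cons.mp hv with rfl | hv
        · exact hay
        · exact fun h => hay ((List.rel_of_pairwise_cons hL hv).trans_lt h)
      have hnil : ∀ ε, (parityPick ε L).filter (· < y) = ∅ := fun ε => filter_eq_empty_iff.mpr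
        fun v hv => hge v (List.mem_cons_of_mem _ (mem_of_mem_parityPick L hv))
      have hcount : (a :: L).countP (· < y) = 0 := List.countP_eq_zero.mpr (by simpa using hge)
      rw [filter_insert, if_neg hay, hnil, hnil, hcount]
      simp

theorem card_filter_lt_add_card_inter_Ico (S : Finset ℕ) {x y : ℕ} (hxy : x ≤ y) :
    #(S.filter (· < x)) + #(S ∩ Ico x y) = #(S.filter (· < y)) := by
  rw [← card_filter_add_card_filter_not (s := S.filter (· < y)) (· < x), filter_filter,
    filter_filter]
  congr 2
  all_goals ext v; simp only [mem_filter, mem_inter, mem_Ico]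
  exacts [and_congr_right fun _ => by omega, and_congr_right fun _ => by omega]

theorem mem_sortList {I J : Finset ℕ} {v : ℕ} : v ∈ sortList I J ↔ v ∈ I ∨ v ∈ J := by
  rw [sortList, Multiset.mem_sort, Multiset.mem_add, mem_val, mem_val]

theorem count_sortList_le_two (I J : Finset ℕ) (v : ℕ) : (sortList I J).count v ≤ 2 := by
  rw [← Multiset.coe_count, sortList, Multiset.sort_eq, Multiset.count_add]
  have hI := Multiset.nodup_iff_count_le_one.mp I.nodup v
  have hJ := Multiset.nodup_iff_count_le_one.mp J.nodup v
  omega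

theorem countP_lt_sortList (I J : Finset ℕ) (y : ℕ) :
    (sortList I J).countP (· < y) = #(I.filter (· < y)) + #(J.filter (· < y)) := by
  rw [← Multiset.coe_countP, sortList, Multiset.sort_eq, Multiset.countP_add,
    Multiset.countP_eq_card_filter, Multiset.countP_eq_card_filter]
  rfl

theorem exists_intervalPart_eq_Ico (r : ℕ) (a : Fin r → ℕ) (j : Fin r) :
    ∃ x y, x ≤ y ∧ intervalPart r a j = Ico x y :=
  ⟨_, _, sum_le_sum_of_subset fun t ht => by simp only [mem_filter] at ht ⊢; exact ⟨ht.1, ht.2.le⟩,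
    rfl⟩

/-- On every interval `[x, y)` the count of `S` is the rounded average of those of `I` and `J`,
hence lies between them. -/
theorem IntervalBase.of_card_filter_lt {r k : ℕ} {a b c : Fin r → ℕ} {I J S : Finset ℕ}
    (hI : IntervalBase r k a b c I) (hJ : IntervalBase r k a b c J)
    (hS : ∀ v ∈ S, v ∈ I ∨ v ∈ J) {δ : ℕ} (hδ : δ ≤ 1)
    (hcount : ∀ y, #(S.filter (· < y)) = (#(I.filter (· < y)) + #(J.filter (· < y)) + δ) / 2) :
    IntervalBase r k a b c S := by
  obtain ⟨hIn, hIk, hIj⟩ := hI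
  obtain ⟨hJn, hJk, hJj⟩ := hJ
  have hSn : S ⊆ range (∑ j, a j) := fun v hv => (hS v hv).elim (hIn ·) (hJn ·)
  refine ⟨hSn, ?_, fun j => ?_⟩
  · have hall : ∀ T ⊆ range (∑ j, a j), T.filter (· < ∑ j, a j) = T := fun T hT =>
      filter_true_of_mem fun v hv => mem_range.mp (hT hv)
    have := hcount (∑ j, a j)
    rw [hall S hSn, hall I hIn, hall J hJn, hIk, hJk] at this
    omega
  · obtain ⟨x, y, hxy, hj⟩ := exists_intervalPart_eq_Ico r a j
    have hIxy := hIj j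
    have hJxy := hJj j
    rw [hj] at hIxy hJxy ⊢
    have := card_filter_lt_add_card_inter_Ico S hxy
    have := card_filter_lt_add_card_inter_Ico I hxy
    have := card_filter_lt_add_card_inter_Ico J hxy
    have := hcount x
    have := hcount y
    omega

/-- The matroid `M_{Π,b,c,k}` for a partition of `[n]` into consecutive intervals is
sort-closed: for any two bases `I, J`, both `U(I,J)` and `V(I,J)` are bases. -/
theorem interval_matroid_sort_closed (r k : ℕ) (a b c : Fin r → ℕ)
    (I J : Finset ℕ) (hI : IntervalBase r k a b c I) (hJ : IntervalBase r k a b c J) :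
    IntervalBase r k a b c (sortU I J) ∧ IntervalBase r k a b c (sortV I J) := by
  have hpick := card_filter_lt_parityPick (L := sortList I J) (Multiset.pairwise_sort _ _)
    (count_sortList_le_two I J)
  have hsub : ∀ ε, ∀ v ∈ parityPick ε (sortList I J), v ∈ I ∨ v ∈ J := fun ε v hv =>
    mem_sortList.mp (mem_of_mem_parityPick _ hv)
  exact ⟨hI.of_card_filter_lt hJ (hsub 0) le_rfl fun y => by
      rw [sortU, ← parityPick, (hpick y).1, countP_lt_sortList],
    hI.of_card_filter_lt hJ (hsub 1) zero_le_one fun y => by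
      rw [sortV, ← parityPick, (hpick y).2, countP_lt_sortList, add_zero]⟩
end

section
/- Let M be the transversal matroid on [n] given by cyclic intervals S_1,…,S_k of [n] (bases are the k-subsets {i_1,…,i_k} with i_s ∈ S_s for some system of distinct representatives). Then M is sort-closed: for any two bases I, J, both U(I,J) and V(I,J) are bases. -/
/-- A cyclic interval of `[n]` (0-based, indices mod `n`). -/
def IsCyclicInterval (n : ℕ) (S : Finset ℕ) : Prop :=
  ∃ s m : ℕ, m ≤ n ∧ S = (Finset.range m).image (fun t => (s + t) % n)

/-- Bases of the transversal matroid given by sets `S_1, …, S_k`: the `k`-subsets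
admitting a system of distinct representatives. -/
def TransversalBase (n k : ℕ) (S : Fin k → Finset ℕ) (I : Finset ℕ) : Prop :=
  I ⊆ Finset.range n ∧ I.card = k ∧
  ∃ f : Fin k → ℕ, Function.Injective f ∧ Finset.image f Finset.univ = I ∧ ∀ s, f s ∈ S s

/-!
Let `P` be `U(I,J)` or `V(I,J)`: every other entry of the sorted multiset `I ∪ J`. The entries of
that list lying in an interval `[a, b)` occupy a contiguous block of positions, of length
`#(I ∩ [a,b)) + #(J ∩ [a,b))`, so `#(P ∩ [a,b))` lies between the minimum and the maximum of
`#(I ∩ [a,b))` and `#(J ∩ [a,b))`. Since `#P = #I = #J` (each value occurs at most twice, so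
entries two positions apart differ), passing to complements gives the lower bound for every
cyclic interval. Hall's condition for `P` on `R ⊆ [k]` follows by splitting `⋃_{r ∈ R} S_r`
into connected components, which are disjoint cyclic intervals `⋃_{r ∈ p} S_r`: on each block
`p` Hall's condition for `I` and `J` and the lower bound give `#p ≤ #(P ∩ ⋃_{r ∈ p} S_r)`.
-/
open Finset

theorem List.Pairwise.getElem_lt_iff_lt_countP {α : Type*} [LinearOrder α] {l : List α}
    (hl : l.Pairwise (· ≤ ·)) (c : α) {t : ℕ} (ht : t < l.length) :
    l[t] < c ↔ t < l.countP (· < c) := by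
  induction l generalizing t with
  | nil => simp at ht
  | cons a l ih =>
    rw [List.pairwise_cons] at hl
    by_cases hac : a < c
    · cases t with
      | zero => simp [hac]
      | succ t => simp [hac, ih hl.2 (Nat.lt_of_succ_lt_succ ht)]
    · have hge : ∀ b ∈ a :: l, ¬ b < c := by
        simp only [List.mem_cons, forall_eq_or_imp]
        exact ⟨hac, fun b hb hbc => hac (lt_of_le_of_lt (hl.1 b hb) hbc)⟩
      have hzero : (a :: l).countP (· < c) = 0 := by simpa using hge
      simpa [hzero] using hge _ (List.getElem_mem ht)

theorem card_filter_mod_two_Ico {ε : ℕ} (hε : ε < 2) {u v : ℕ} (huv : u ≤ v) :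
    #((Ico u v).filter (· % 2 = ε)) = (v + 1 - ε) / 2 - (u + 1 - ε) / 2 := by
  induction v, huv using Nat.le_induction with
  | base => simp
  | succ v huv ih =>
    rw [Nat.Ico_succ_right_eq_insert_Ico huv, filter_insert]
    split_ifs with hv
    · rw [card_insert_of_notMem (by simp), ih]; omega
    · rw [ih]; omega

theorem card_filter_lt_succ_le (K : Finset ℕ) (v : ℕ) :
    #(K.filter (· < v + 1)) ≤ #(K.filter (· < v)) + 1 := by
  calc #(K.filter (· < v + 1)) ≤ #(insert v (K.filter (· < v))) := by
        refine card_le_card fun x hx => ?_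
        simp only [mem_filter, mem_insert] at hx ⊢
        grind
    _ ≤ _ := card_insert_le _ _

theorem card_inter_Ico_add_card_filter_lt (K : Finset ℕ) {a b : ℕ} (hab : a ≤ b) :
    #(K ∩ Ico a b) + #(K.filter (· < a)) = #(K.filter (· < b)) := by
  rw [← card_filter_add_card_filter_not (s := K.filter (· < b)) (· < a), filter_filter,
    filter_filter, add_comm]
  congr 2
  · ext x; simp only [mem_filter]; grind
  · ext x; simp only [mem_inter, mem_Ico, mem_filter]; grind

def countBelow (I J : Finset ℕ) (c : ℕ) : ℕ := #(I.filter (· < c)) + #(J.filter (· < c))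

theorem length_sortList (I J : Finset ℕ) : (sortList I J).length = #I + #J := by
  rw [sortList, Multiset.length_sort, Multiset.card_add]; rfl

theorem pairwise_sortList (I J : Finset ℕ) : (sortList I J).Pairwise (· ≤ ·) :=
  Multiset.pairwise_sort _ _

theorem countBelow_le_length (I J : Finset ℕ) (c : ℕ) :
    countBelow I J c ≤ (sortList I J).length := by
  rw [length_sortList, countBelow]
  exact add_le_add (card_filter_le _ _) (card_filter_le _ _)

theorem countBelow_succ_le (I J : Finset ℕ) (v : ℕ) :
    countBelow I J (v + 1) ≤ countBelow I J v + 2 := by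
  have := card_filter_lt_succ_le I v
  have := card_filter_lt_succ_le J v
  unfold countBelow; omega

theorem getElem_sortList_lt_iff {I J : Finset ℕ} (c : ℕ) {t : ℕ}
    (ht : t < (sortList I J).length) :
    (sortList I J)[t] < c ↔ t < countBelow I J c := by
  rw [(pairwise_sortList I J).getElem_lt_iff_lt_countP c ht]
  have hsort : ((sortList I J : List ℕ) : Multiset ℕ) = I.val + J.val := Multiset.sort_eq _ _
  rw [← Multiset.coe_countP, hsort, Multiset.countP_add, countBelow, card_def, card_def,
    filter_val, filter_val, Multiset.countP_eq_card_filter, Multiset.countP_eq_card_filter]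

theorem getElem_sortList_ne {I J : Finset ℕ} {t t' : ℕ} (htt' : t + 2 ≤ t')
    (ht' : t' < (sortList I J).length) :
    (sortList I J)[t] ≠ (sortList I J)[t'] := by
  intro heq
  have hbelow : countBelow I J (sortList I J)[t] ≤ t :=
    not_lt.mp fun h => lt_irrefl _ ((getElem_sortList_lt_iff _ _).mpr h)
  have habove : t' < countBelow I J ((sortList I J)[t] + 1) :=
    (getElem_sortList_lt_iff _ ht').mp (heq ▸ Nat.lt_succ_self _)
  have := countBelow_succ_le I J (sortList I J)[t]
  omega

theorem getElem_sortList_mem_Ico_iff {I J : Finset ℕ} (a b : ℕ) {t : ℕ}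
    (ht : t < (sortList I J).length) :
    (sortList I J)[t] ∈ Ico a b ↔ t ∈ Ico (countBelow I J a) (countBelow I J b) := by
  simp only [mem_Ico, ← not_lt, getElem_sortList_lt_iff _ ht]

theorem getElem_sortList_mem {I J : Finset ℕ} {t : ℕ} (ht : t < (sortList I J).length) :
    (sortList I J)[t] ∈ I ∪ J := by
  have := Multiset.mem_sort (· ≤ ·) |>.mp (List.getElem_mem ht)
  simpa [Multiset.mem_add] using this

def sortParity (I J : Finset ℕ) (ε : ℕ) : Finset ℕ :=
  ((range (sortList I J).length).filter (· % 2 = ε)).image ((sortList I J).getD · 0)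

theorem sortU_eq_sortParity (I J : Finset ℕ) : sortU I J = sortParity I J 0 := by
  ext; simp [sortU, sortParity]

theorem sortV_eq_sortParity (I J : Finset ℕ) : sortV I J = sortParity I J 1 := by
  ext; simp [sortV, sortParity]

theorem injOn_getD_sortList (I J : Finset ℕ) (ε : ℕ) :
    Set.InjOn ((sortList I J).getD · 0) ((range (sortList I J).length).filter (· % 2 = ε)) := by
  intro t ht t' ht' heq
  simp only [mem_coe, mem_filter, mem_range] at ht ht'
  simp only [List.getD_eq_getElem _ _ ht.1, List.getD_eq_getElem _ _ ht'.1] at heq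
  by_contra hne
  rcases Nat.lt_or_gt_of_ne hne with h | h
  · exact getElem_sortList_ne (by omega) ht'.1 heq
  · exact getElem_sortList_ne (by omega) ht.1 heq.symm

theorem sortParity_subset_union (I J : Finset ℕ) (ε : ℕ) : sortParity I J ε ⊆ I ∪ J := by
  intro x hx
  obtain ⟨t, ht, rfl⟩ := mem_image.mp hx
  have ht := mem_range.mp (mem_filter.mp ht).1
  rw [List.getD_eq_getElem _ _ ht]
  exact getElem_sortList_mem ht

theorem card_sortParity {I J : Finset ℕ} (hIJ : #I = #J) {ε : ℕ} (hε : ε < 2) :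
    #(sortParity I J ε) = #I := by
  rw [sortParity, card_image_of_injOn (injOn_getD_sortList I J ε), range_eq_Ico,
    card_filter_mod_two_Ico hε (Nat.zero_le _), length_sortList]
  omega

theorem card_sortParity_inter_Ico (I J : Finset ℕ) (ε a b : ℕ) :
    #(sortParity I J ε ∩ Ico a b) =
      #((Ico (countBelow I J a) (countBelow I J b)).filter (· % 2 = ε)) := by
  have hsub : (Ico (countBelow I J a) (countBelow I J b)).filter (· % 2 = ε) ⊆
      (range (sortList I J).length).filter (· % 2 = ε) := by
    have := countBelow_le_length I J b
    intro t ht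
    simp only [mem_filter, mem_Ico, mem_range] at ht ⊢
    omega
  have heq : sortParity I J ε ∩ Ico a b =
      ((Ico (countBelow I J a) (countBelow I J b)).filter (· % 2 = ε)).image
        ((sortList I J).getD · 0) := by
    ext x
    simp only [sortParity, mem_inter, mem_image]
    constructor
    · rintro ⟨⟨t, ht, rfl⟩, hx⟩
      have htN := mem_range.mp (mem_filter.mp ht).1
      rw [List.getD_eq_getElem _ _ htN, getElem_sortList_mem_Ico_iff a b htN] at hx
      exact ⟨t, mem_filter.mpr ⟨hx, (mem_filter.mp ht).2⟩, rfl⟩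
    · rintro ⟨t, ht, rfl⟩
      have htN := mem_range.mp (mem_filter.mp (hsub ht)).1
      refine ⟨⟨t, hsub ht, rfl⟩, ?_⟩
      rw [List.getD_eq_getElem _ _ htN, getElem_sortList_mem_Ico_iff a b htN]
      exact (mem_filter.mp ht).1
  rw [heq, card_image_of_injOn ((injOn_getD_sortList I J ε).mono (coe_subset.mpr hsub))]

theorem card_sortParity_inter_Ico_mem_Icc {I J : Finset ℕ} {ε : ℕ} (hε : ε < 2) {a b : ℕ}
    (hab : a ≤ b) :
    #(sortParity I J ε ∩ Ico a b) ∈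
      Icc (min #(I ∩ Ico a b) #(J ∩ Ico a b)) (max #(I ∩ Ico a b) #(J ∩ Ico a b)) := by
  have hI := card_inter_Ico_add_card_filter_lt I hab
  have hJ := card_inter_Ico_add_card_filter_lt J hab
  rw [card_sortParity_inter_Ico, card_filter_mod_two_Ico hε (by unfold countBelow; omega)]
  rw [mem_Icc]
  unfold countBelow
  interval_cases ε <;> omega

theorem mem_image_add_mod_iff {n a m x : ℕ} (ha : a < n) (hm : m ≤ n) :
    x ∈ (range m).image (fun t => (a + t) % n) ↔
      x < n ∧ (a ≤ x ∧ x < a + m ∨ x + n < a + m) := by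
  simp only [mem_image, mem_range]
  constructor
  · rintro ⟨t, ht, rfl⟩
    rcases Nat.lt_or_ge (a + t) n with h | h
    · rw [Nat.mod_eq_of_lt h]; omega
    · rw [Nat.mod_eq_sub_mod h, Nat.mod_eq_of_lt (by omega)]; omega
  · rintro ⟨hx, ⟨hax, hxm⟩ | hxm⟩
    · exact ⟨x - a, by omega, by rw [Nat.add_sub_cancel' hax, Nat.mod_eq_of_lt hx]⟩
    · refine ⟨x + n - a, by omega, ?_⟩
      rw [show a + (x + n - a) = x + n by omega, Nat.add_mod_right, Nat.mod_eq_of_lt hx]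

theorem IsCyclicInterval.exists_eq_Ico_or_eq_range_sdiff_Ico {n : ℕ} {S : Finset ℕ}
    (hS : IsCyclicInterval n S) :
    ∃ a b, a ≤ b ∧ b ≤ n ∧ (S = Ico a b ∨ S = range n \ Ico a b) := by
  obtain ⟨s, m, hm, rfl⟩ := hS
  rcases Nat.eq_zero_or_pos n with rfl | hn
  · exact ⟨0, 0, le_rfl, le_rfl, Or.inl (by simp [Nat.le_zero.mp hm])⟩
  have ha : s % n < n := Nat.mod_lt _ hn
  have hshift : (range m).image (fun t => (s + t) % n) =
      (range m).image (fun t => (s % n + t) % n) :=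
    image_congr fun t _ => (Nat.mod_add_mod s n t).symm
  rw [hshift]
  rcases le_or_gt (s % n + m) n with hwrap | hwrap
  · refine ⟨s % n, s % n + m, by omega, hwrap, Or.inl ?_⟩
    ext x
    rw [mem_image_add_mod_iff ha hm, mem_Ico]
    omega
  · refine ⟨s % n + m - n, s % n, by omega, ha.le, Or.inr ?_⟩
    ext x
    rw [mem_image_add_mod_iff ha hm, mem_sdiff, mem_range, mem_Ico]
    omega

theorem isCyclicInterval_Ico {n a b : ℕ} (hb : b ≤ n) : IsCyclicInterval n (Ico a b) := by
  refine ⟨a, b - a, by omega, ?_⟩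
  ext x
  simp only [mem_Ico, mem_image, mem_range]
  constructor
  · intro hx
    exact ⟨x - a, by omega, by rw [Nat.add_sub_cancel' hx.1, Nat.mod_eq_of_lt (by omega)]⟩
  · rintro ⟨t, ht, rfl⟩
    rw [Nat.mod_eq_of_lt (by omega)]
    omega

theorem isCyclicInterval_range_sdiff_Ico {n a b : ℕ} (hab : a ≤ b) (hb : b ≤ n) :
    IsCyclicInterval n (range n \ Ico a b) := by
  rcases Nat.eq_zero_or_pos n with rfl | hn
  · exact ⟨0, 0, le_rfl, by simp⟩
  rcases Nat.lt_or_ge b n with hbn | hbn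
  · refine ⟨b, n - b + a, by omega, ?_⟩
    ext x
    rw [mem_image_add_mod_iff hbn (by omega), mem_sdiff, mem_range, mem_Ico]
    omega
  · refine ⟨0, a, by omega, ?_⟩
    ext x
    rw [mem_image_add_mod_iff hn (by omega), mem_sdiff, mem_range, mem_Ico]
    omega

theorem isCyclicInterval_Ico_union_range_sdiff_Ico {n a b c d x : ℕ} (hb : b ≤ n)
    (hcd : c ≤ d) (hd : d ≤ n) (hxA : x ∈ Ico a b) (hxB : x ∈ range n \ Ico c d) :
    IsCyclicInterval n (Ico a b ∪ (range n \ Ico c d)) := by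
  simp only [mem_sdiff, mem_range, mem_Ico] at hxA hxB
  rcases Nat.lt_or_ge x c with hxc | hdx
  · rw [show Ico a b ∪ (range n \ Ico c d) = range n \ Ico (max c (min b d)) d by
      ext y; simp only [mem_union, mem_sdiff, mem_range, mem_Ico]; omega]
    exact isCyclicInterval_range_sdiff_Ico (by omega) hd
  · rw [show Ico a b ∪ (range n \ Ico c d) = range n \ Ico c (min d (max a c)) by
      ext y; simp only [mem_union, mem_sdiff, mem_range, mem_Ico]; omega]
    exact isCyclicInterval_range_sdiff_Ico (by omega) (by omega)

theorem IsCyclicInterval.union {n : ℕ} {A B : Finset ℕ} (hA : IsCyclicInterval n A)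
    (hB : IsCyclicInterval n B) (hAB : ¬ Disjoint A B) : IsCyclicInterval n (A ∪ B) := by
  obtain ⟨x, hxA, hxB⟩ := not_disjoint_iff.mp hAB
  obtain ⟨a, b, hab, hb, rfl | rfl⟩ := hA.exists_eq_Ico_or_eq_range_sdiff_Ico <;>
    obtain ⟨c, d, hcd, hd, rfl | rfl⟩ := hB.exists_eq_Ico_or_eq_range_sdiff_Ico
  · simp only [mem_Ico] at hxA hxB
    rw [show Ico a b ∪ Ico c d = Ico (min a c) (max b d) by
      ext y; simp only [mem_union, mem_Ico]; omega]
    exact isCyclicInterval_Ico (by omega)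
  · exact isCyclicInterval_Ico_union_range_sdiff_Ico hb hcd hd hxA hxB
  · rw [union_comm]
    exact isCyclicInterval_Ico_union_range_sdiff_Ico hd hab hb hxB hxA
  · by_cases hoverlap : max a c ≤ min b d
    · rw [show (range n \ Ico a b) ∪ (range n \ Ico c d) = range n \ Ico (max a c) (min b d) by
        ext y; simp only [mem_union, mem_sdiff, mem_range, mem_Ico]; omega]
      exact isCyclicInterval_range_sdiff_Ico hoverlap (by omega)
    · rw [show (range n \ Ico a b) ∪ (range n \ Ico c d) = range n \ Ico 0 0 by
        ext y; simp only [mem_union, mem_sdiff, mem_range, mem_Ico]; omega]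
      exact isCyclicInterval_range_sdiff_Ico le_rfl (Nat.zero_le n)

section UnionClosed

variable {ι α : Type*} [DecidableEq α] {C : Finset α → Prop}

theorem union_biUnion_of_union_closed {β : Type*}
    (hC : ∀ A B, C A → C B → ¬ Disjoint A B → C (A ∪ B)) {A : Finset α} (hA : C A)
    {Q : Finset β} {X : β → Finset α} (hQ : ∀ q ∈ Q, C (X q) ∧ ¬ Disjoint A (X q)) :
    C (A ∪ Q.biUnion X) := by
  classical
  induction Q using Finset.induction_on with
  | empty => simpa using hA
  | insert q Q _ ih =>
    rw [biUnion_insert, union_left_comm, union_comm]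
    obtain ⟨hCq, hAq⟩ := hQ q (mem_insert_self q Q)
    exact hC _ _ (ih fun q' hq' => hQ q' (mem_insert_of_mem hq')) hCq
      fun hd => hAq (hd.mono_left subset_union_left)

theorem exists_cover_pairwiseDisjoint_of_union_closed [DecidableEq ι]
    (hC : ∀ A B, C A → C B → ¬ Disjoint A B → C (A ∪ B)) {S : ι → Finset α}
    (hS : ∀ i, C (S i)) (R : Finset ι) :
    ∃ P : Finset (Finset ι), P.biUnion id = R ∧ (∀ p ∈ P, C (p.biUnion S)) ∧
      (P : Set (Finset ι)).PairwiseDisjoint (·.biUnion S) := by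
  induction R using Finset.induction_on with
  | empty => exact ⟨∅, by simp, by simp, by simp⟩
  | insert r R _ ih =>
    obtain ⟨P, hPR, hPC, hPdisj⟩ := ih
    set Q := P.filter fun p => ¬ Disjoint (S r) (p.biUnion S)
    have hQP : Q ⊆ P := filter_subset _ _
    have hmerged : (insert r (Q.biUnion id)).biUnion S = S r ∪ Q.biUnion (·.biUnion S) := by
      rw [biUnion_insert, biUnion_biUnion]; rfl
    refine ⟨insert (insert r (Q.biUnion id)) (P \ Q), ?_, ?_, ?_⟩
    · rw [biUnion_insert, ← hPR, id, insert_union, ← union_biUnion, union_sdiff_of_subset hQP]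
    · simp only [mem_insert, forall_eq_or_imp]
      refine ⟨?_, fun p hp => hPC p (mem_sdiff.mp hp).1⟩
      rw [hmerged]
      exact union_biUnion_of_union_closed hC (hS r) fun q hq =>
        ⟨hPC q (hQP hq), (mem_filter.mp hq).2⟩
    · rw [coe_insert]
      refine (hPdisj.subset (by simp)).insert fun q hq _ => ?_
      obtain ⟨hqP, hqQ⟩ := mem_sdiff.mp hq
      rw [hmerged, disjoint_union_left, disjoint_biUnion_left]
      refine ⟨by simpa [Q, hqP] using hqQ, fun p hp => hPdisj (hQP hp) hqP ?_⟩
      rintro rfl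
      exact hqQ hp

theorem card_le_card_inter_biUnion_of_min_le [DecidableEq ι]
    (hC : ∀ A B, C A → C B → ¬ Disjoint A B → C (A ∪ B)) {S : ι → Finset α}
    (hS : ∀ i, C (S i)) {I J P : Finset α}
    (hI : ∀ R : Finset ι, #R ≤ #(I ∩ R.biUnion S))
    (hJ : ∀ R : Finset ι, #R ≤ #(J ∩ R.biUnion S))
    (hP : ∀ T, C T → min #(I ∩ T) #(J ∩ T) ≤ #(P ∩ T)) (R : Finset ι) :
    #R ≤ #(P ∩ R.biUnion S) := by
  obtain ⟨Q, hQR, hQC, hQdisj⟩ := exists_cover_pairwiseDisjoint_of_union_closed hC hS R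
  have hunion : R.biUnion S = Q.biUnion (·.biUnion S) := by
    rw [← hQR, biUnion_biUnion]; rfl
  calc #R = #(Q.biUnion id) := by rw [hQR]
    _ ≤ ∑ p ∈ Q, #p := card_biUnion_le
    _ ≤ ∑ p ∈ Q, #(P ∩ p.biUnion S) :=
        sum_le_sum fun p hp => (le_min (hI p) (hJ p)).trans (hP _ (hQC p hp))
    _ = #(P ∩ R.biUnion S) := by
        rw [hunion, inter_biUnion, card_biUnion (hQdisj.mono fun p => inter_subset_right)]

end UnionClosed

theorem card_inter_range_sdiff_add_card_inter {n : ℕ} {K : Finset ℕ} (hK : K ⊆ range n)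
    (X : Finset ℕ) : #(K ∩ (range n \ X)) + #(K ∩ X) = #K := by
  rw [← card_sdiff_add_card_inter K X]
  congr 2
  ext x
  simp only [mem_inter, mem_sdiff]
  exact ⟨fun h => ⟨h.1, h.2.2⟩, fun h => ⟨h.1, hK h.1, h.2⟩⟩

theorem min_card_inter_le_card_sortParity_inter {n : ℕ} {I J : Finset ℕ} (hI : I ⊆ range n)
    (hJ : J ⊆ range n) (hIJ : #I = #J) {ε : ℕ} (hε : ε < 2) {T : Finset ℕ}
    (hT : IsCyclicInterval n T) : min #(I ∩ T) #(J ∩ T) ≤ #(sortParity I J ε ∩ T) := by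
  obtain ⟨a, b, hab, -, rfl | rfl⟩ := hT.exists_eq_Ico_or_eq_range_sdiff_Ico
  · exact (mem_Icc.mp (card_sortParity_inter_Ico_mem_Icc hε hab)).1
  · -- the upper bound on the complementary interval, together with `#P = #I = #J`
    have hP : sortParity I J ε ⊆ range n :=
      (sortParity_subset_union I J ε).trans (union_subset hI hJ)
    have hIco := (mem_Icc.mp (card_sortParity_inter_Ico_mem_Icc (I := I) (J := J) hε hab)).2
    have := card_inter_range_sdiff_add_card_inter hI (Ico a b)
    have := card_inter_range_sdiff_add_card_inter hJ (Ico a b)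
    have := card_inter_range_sdiff_add_card_inter hP (Ico a b)
    have := card_sortParity hIJ hε
    omega

theorem TransversalBase.card_le_card_inter_biUnion {n k : ℕ} {S : Fin k → Finset ℕ}
    {I : Finset ℕ} (hI : TransversalBase n k S I) (R : Finset (Fin k)) :
    #R ≤ #(I ∩ R.biUnion S) := by
  obtain ⟨-, -, f, hf, rfl, hfS⟩ := hI
  rw [← card_image_of_injective R hf]
  refine card_le_card fun x hx => ?_
  obtain ⟨r, hr, rfl⟩ := mem_image.mp hx
  exact mem_inter.mpr ⟨mem_image_of_mem f (mem_univ r), mem_biUnion.mpr ⟨r, hr, hfS r⟩⟩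

theorem transversalBase_of_card_le {n k : ℕ} {S : Fin k → Finset ℕ} {P : Finset ℕ}
    (hP : P ⊆ range n) (hcard : #P = k)
    (hall : ∀ R : Finset (Fin k), #R ≤ #(P ∩ R.biUnion S)) :
    TransversalBase n k S P := by
  obtain ⟨f, hf, hfP⟩ := (all_card_le_biUnion_card_iff_exists_injective fun s => P ∩ S s).mp
    fun R => (inter_biUnion P R S).symm ▸ hall R
  refine ⟨hP, hcard, f, hf, ?_, fun s => (mem_inter.mp (hfP s)).2⟩
  refine eq_of_subset_of_card_le (fun x hx => ?_) ?_
  · obtain ⟨s, -, rfl⟩ := mem_image.mp hx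
    exact (mem_inter.mp (hfP s)).1
  · rw [card_image_of_injective _ hf, card_univ, Fintype.card_fin, hcard]

theorem TransversalBase.sortParity {n k : ℕ} {S : Fin k → Finset ℕ}
    (hS : ∀ s, IsCyclicInterval n (S s)) {I J : Finset ℕ} (hI : TransversalBase n k S I)
    (hJ : TransversalBase n k S J) {ε : ℕ} (hε : ε < 2) :
    TransversalBase n k S (sortParity I J ε) := by
  have hIJ : #I = #J := hI.2.1.trans hJ.2.1.symm
  refine transversalBase_of_card_le
    ((sortParity_subset_union I J ε).trans (union_subset hI.1 hJ.1))
    ((card_sortParity hIJ hε).trans hI.2.1) ?_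
  exact card_le_card_inter_biUnion_of_min_le (fun _ _ => IsCyclicInterval.union) hS
    hI.card_le_card_inter_biUnion hJ.card_le_card_inter_biUnion
    fun _ hT => min_card_inter_le_card_sortParity_inter hI.1 hJ.1 hIJ hε hT

/-- A transversal matroid given by cyclic intervals `S_1, …, S_k` of `[n]` is
sort-closed: for any two bases `I, J`, both `U(I,J)` and `V(I,J)` are bases. -/
theorem cyclically_transversal_sort_closed (n k : ℕ) (S : Fin k → Finset ℕ)
    (hS : ∀ s, IsCyclicInterval n (S s))
    (I J : Finset ℕ) (hI : TransversalBase n k S I) (hJ : TransversalBase n k S J) :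
    TransversalBase n k S (sortU I J) ∧ TransversalBase n k S (sortV I J) := by
  rw [sortU_eq_sortParity, sortV_eq_sortParity]
  exact ⟨hI.sortParity hS hJ (by norm_num), hI.sortParity hS hJ (by norm_num)⟩
end

section
/- For n ≥ 3, the sum over permutations w of [n-1] of w_1 · t^{des(w)+1} equals the sum over permutations w of [n-1] of (des(w)+1) · t^{des(w)+1}; i.e., ∑_{w ∈ S_{n-1}} w(1) t^{des(w)+1} = ∑_{w ∈ S_{n-1}} (des(w)+1) t^{des(w)+1} as polynomials in t. Equivalently, for each fixed d, ∑_{w ∈ S_{n-1}, des(w)=d} w(1) = (d+1) · A_{d+1,n-1}. -/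
/-!
Write a permutation of `Fin (m + 1)` as its word of values and obtain every word of length
`m + 1` by inserting the largest letter `m` into a word of length `m` with `d` descents. Put in
front, `m` becomes the first letter and adds a descent; of the other `m` slots the `d + 1` that
follow a descent top or end the word keep `d` descents, the remaining `m - d` add one, and the
first letter stays. Tracking an arbitrary weight `g (des w)` through this recursion,
`∑ (w₁ + 1) • g (des w) = ∑ (des w + 1) • g (des w)` follows by induction on `m`, the induction
hypothesis being used for the weight `e ↦ (e + 1) • g e + (m - e) • g (e + 1)`.
-/

open Polynomial

def descentCount : List ℕ → ℕ
  | a :: b :: t => (if b < a then 1 else 0) + descentCount (b :: t)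
  | _ => 0

theorem descentCount_cons_cons (a b : ℕ) (t : List ℕ) :
    descentCount (a :: b :: t) = (if b < a then 1 else 0) + descentCount (b :: t) := rfl

theorem descentCount_cons_le (b : ℕ) (t : List ℕ) : descentCount (b :: t) ≤ t.length := by
  induction t generalizing b with
  | nil => simp [descentCount]
  | cons c s ih =>
    rw [descentCount_cons_cons, List.length_cons]
    have := ih c
    split_ifs <;> omega

theorem descentCount_ofFn : ∀ {k : ℕ} (f : Fin k → ℕ),
    descentCount (List.ofFn f) =
      (Finset.univ.filter fun i : Fin k => ∃ h : i.1 + 1 < k, f ⟨i + 1, h⟩ < f i).card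
  | 0, f => by simp [descentCount]
  | 1, f => by
    refine (Finset.card_eq_zero.2 (Finset.filter_eq_empty_iff.2 ?_)).symm
    rintro i - ⟨h, -⟩
    omega
  | k + 2, f => by
    have htail : List.ofFn (fun i => f i.succ) = f 1 :: List.ofFn fun i => f i.succ.succ :=
      List.ofFn_succ
    rw [List.ofFn_succ, htail, descentCount_cons_cons, ← htail, descentCount_ofFn,
      Fin.card_filter_univ_succ (n := k + 1)]
    simp only [Fin.succ_mk, Fin.val_succ, Fin.val_zero]
    have hfirst : (∃ h : 0 + 1 < k + 2, f ⟨0 + 1, h⟩ < f 0) ↔ f 1 < f 0 :=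
      ⟨fun ⟨_, h⟩ => h, fun h => ⟨by omega, h⟩⟩
    have hrest (x : Fin (k + 1)) : (∃ h : x.1 + 1 + 1 < k + 2, f ⟨x + 1 + 1, h⟩ < f x.succ) ↔
        ∃ h : x.1 + 1 < k + 1, f ⟨x + 1 + 1, by omega⟩ < f x.succ :=
      ⟨fun ⟨h, h'⟩ => ⟨by omega, h'⟩, fun ⟨h, h'⟩ => ⟨by omega, h'⟩⟩
    simp only [hfirst, hrest]
    split_ifs <;> omega

/-- `permutations'` of `[m - 1, …, 0]` inserts the largest letter `m - 1` into the words on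
`{0, …, m - 2}`. -/
def permLists (m : ℕ) : List (List ℕ) := (List.range m).reverse.permutations'

theorem permLists_succ (m : ℕ) :
    permLists (m + 1) = (permLists m).flatMap (List.permutations'Aux m) := by
  simp [permLists, List.range_succ]

theorem mem_permLists {m : ℕ} {l : List ℕ} : l ∈ permLists m ↔ l.Perm (List.range m).reverse :=
  List.mem_permutations'

theorem nodup_permLists (m : ℕ) : (permLists m).Nodup :=
  (List.permutations_perm_permutations' _).nodup_iff.1
    (List.nodup_permutations _ (List.nodup_reverse.2 List.nodup_range))

theorem length_of_mem_permLists {m : ℕ} {l : List ℕ} (h : l ∈ permLists m) : l.length = m := by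
  simpa using (mem_permLists.1 h).length_eq

theorem lt_of_mem_permLists {m : ℕ} {l : List ℕ} (h : l ∈ permLists m) : ∀ x ∈ l, x < m := by
  intro x hx
  simpa using (mem_permLists.1 h).mem_iff.1 hx

theorem descentCount_le_of_mem_permLists {m : ℕ} {l : List ℕ} (h : l ∈ permLists (m + 1)) :
    descentCount l ≤ m := by
  obtain _ | ⟨b, t⟩ := l
  · simp [descentCount]
  · have := length_of_mem_permLists h
    simp only [List.length_cons, add_left_inj] at this
    exact this ▸ descentCount_cons_le b t

def permWord {m : ℕ} (w : Equiv.Perm (Fin m)) : List ℕ := List.ofFn fun i => (w i : ℕ)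

theorem permWord_mem_permLists {m : ℕ} (w : Equiv.Perm (Fin m)) : permWord w ∈ permLists m := by
  refine mem_permLists.2 ((Equiv.Perm.ofFn_comp_perm w Fin.val).trans ?_)
  rw [show List.ofFn (Fin.val : Fin m → ℕ) = List.range m by simp [List.ofFn_eq_map]]
  exact (List.reverse_perm _).symm

theorem permWord_injective {m : ℕ} : Function.Injective (permWord (m := m)) := fun _ _ h =>
  Equiv.ext fun i => Fin.ext (congrFun (List.ofFn_inj.1 h) i)

theorem map_permWord_univ (m : ℕ) :
    ((Finset.univ : Finset (Equiv.Perm (Fin m))).val.map permWord) = permLists m := by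
  refine Multiset.eq_of_le_of_card_le ?_ ?_
  · refine (Multiset.le_iff_subset (Finset.univ.nodup.map permWord_injective)).2 fun l hl => ?_
    obtain ⟨w, -, rfl⟩ := Multiset.mem_map.1 hl
    exact permWord_mem_permLists w
  · simp [permLists, ← (List.permutations_perm_permutations' _).length_eq,
      List.length_permutations, Fintype.card_perm]

theorem numDescents_eq_descentCount_permWord {m : ℕ} (w : Equiv.Perm (Fin m)) :
    numDescents w = descentCount (permWord w) := by
  rw [numDescents, permWord, descentCount_ofFn]
  refine congrArg Finset.card (Finset.filter_congr fun i _ => ?_)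
  refine ⟨fun ⟨h, hlt⟩ => ⟨h, ?_⟩, fun ⟨h, hlt⟩ => ⟨h, ?_⟩⟩ <;>
    rwa [show (⟨(i + 1) % m, _⟩ : Fin m) = ⟨i + 1, h⟩ from Fin.ext (Nat.mod_eq_of_lt h)] at *

theorem headI_permWord {m : ℕ} (w : Equiv.Perm (Fin m)) (hm : 0 < m) :
    (permWord w).headI = w ⟨0, hm⟩ := by
  obtain ⟨k, rfl⟩ := Nat.exists_eq_succ_of_ne_zero hm.ne'
  simp [permWord, List.ofFn_succ]

section Weighted

variable {M : Type*} [AddCommMonoid M]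

theorem sum_permutations'Aux_descentCount_cons (g : ℕ → M) {a : ℕ} (b : ℕ) (t : List ℕ)
    (h : ∀ x ∈ b :: t, x < a) :
    ((List.permutations'Aux a t).map fun u => g (descentCount (b :: u))).sum =
      (descentCount (b :: t) + 1) • g (descentCount (b :: t)) +
        (t.length - descentCount (b :: t)) • g (descentCount (b :: t) + 1) := by
  induction t generalizing b g with
  | nil =>
    have hba : ¬ a < b := (h b (by simp)).not_gt
    simp [List.permutations'Aux, descentCount, hba]
  | cons c s ih =>
    have hca : c < a := h c (by simp)
    have hD := descentCount_cons_le c s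
    rw [List.permutations'Aux, List.map_cons, List.sum_cons, List.map_map]
    simp only [Function.comp_def, descentCount_cons_cons b c]
    rw [ih (fun e => g ((if c < b then 1 else 0) + e)) c fun x hx => h x (by simp_all)]
    simp only [descentCount_cons_cons b a, descentCount_cons_cons a c, hca, if_true,
      (h b (by simp)).not_gt, if_false, List.length_cons]
    split_ifs
    · rw [show s.length + 1 - (1 + descentCount (c :: s)) = s.length - descentCount (c :: s) by
        omega]
      simp only [zero_add, add_comm 1]
      module
    · rw [show s.length + 1 - (0 + descentCount (c :: s)) = s.length - descentCount (c :: s) + 1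
        by omega]
      simp only [zero_add, add_comm 1]
      module

theorem sum_permutations'Aux_cons (F : ℕ → ℕ → M) {a b : ℕ} {t : List ℕ}
    (h : ∀ x ∈ b :: t, x < a) :
    ((List.permutations'Aux a (b :: t)).map fun u => F (descentCount u) u.headI).sum =
      F (descentCount (b :: t) + 1) a + (descentCount (b :: t) + 1) • F (descentCount (b :: t)) b +
        (t.length - descentCount (b :: t)) • F (descentCount (b :: t) + 1) b := by
  rw [List.permutations'Aux, List.map_cons, List.sum_cons, List.map_map, Function.comp_def,
    add_assoc]
  simp only [List.headI_cons, descentCount_cons_cons a b, h b (by simp), if_true, add_comm 1]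
  rw [sum_permutations'Aux_descentCount_cons (F · b) b t h]

theorem sum_permLists_succ_succ (F : ℕ → ℕ → M) (m : ℕ) :
    ((permLists (m + 2)).map fun u => F (descentCount u) u.headI).sum =
      ((permLists (m + 1)).map fun v =>
        F (descentCount v + 1) (m + 1) + (descentCount v + 1) • F (descentCount v) v.headI +
          (m - descentCount v) • F (descentCount v + 1) v.headI).sum := by
  rw [permLists_succ, List.flatMap, List.map_flatten, List.sum_flatten, List.map_map,
    List.map_map]
  refine congrArg List.sum (List.map_congr_left fun v hv => ?_)
  obtain _ | ⟨b, t⟩ := v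
  · simpa using length_of_mem_permLists hv
  · have ht : t.length = m := by simpa using length_of_mem_permLists hv
    simpa [ht] using sum_permutations'Aux_cons F (lt_of_mem_permLists hv)

theorem sum_permLists_headI_add_one_smul (m : ℕ) (g : ℕ → M) :
    ((permLists (m + 1)).map fun l => (l.headI + 1) • g (descentCount l)).sum =
      ((permLists (m + 1)).map fun l => (descentCount l + 1) • g (descentCount l)).sum := by
  induction m generalizing g with
  | zero => rfl
  | succ m ih =>
    rw [sum_permLists_succ_succ (fun e x => (x + 1) • g e),
      sum_permLists_succ_succ (fun e _ => (e + 1) • g e)]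
    let G e := (e + 1) • g e + (m - e) • g (e + 1)
    calc _ = ((permLists (m + 1)).map fun v =>
            (v.headI + 1) • G (descentCount v) + (m + 2) • g (descentCount v + 1)).sum := by
          refine congrArg List.sum (List.map_congr_left fun v _ => ?_)
          module
      _ = ((permLists (m + 1)).map fun v =>
            (descentCount v + 1) • G (descentCount v) + (m + 2) • g (descentCount v + 1)).sum := by
          rw [List.sum_map_add, ih G, ← List.sum_map_add]
      _ = _ := by
          refine congrArg List.sum (List.map_congr_left fun v hv => ?_)
          obtain ⟨k, hk⟩ := Nat.exists_eq_add_of_le (descentCount_le_of_mem_permLists hv)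
          simp only [G, hk, Nat.add_sub_cancel_left]
          module

theorem sum_perm_permWord (m : ℕ) (F : List ℕ → M) :
    ∑ w : Equiv.Perm (Fin m), F (permWord w) = ((permLists m).map F).sum := by
  rw [Finset.sum_eq_multiset_sum, ← Function.comp_def, ← Multiset.map_map, map_permWord_univ,
    Multiset.map_coe, Multiset.sum_coe]

theorem sum_perm_first_add_one_smul {m : ℕ} (hm : 0 < m) (g : ℕ → M) :
    ∑ w : Equiv.Perm (Fin m), ((w ⟨0, hm⟩ : ℕ) + 1) • g (numDescents w) =
      ∑ w : Equiv.Perm (Fin m), (numDescents w + 1) • g (numDescents w) := by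
  obtain ⟨k, rfl⟩ := Nat.exists_eq_succ_of_ne_zero hm.ne'
  simp only [numDescents_eq_descentCount_permWord, ← headI_permWord _ hm]
  rw [sum_perm_permWord _ fun l => (l.headI + 1) • g (descentCount l),
    sum_perm_permWord _ fun l => (descentCount l + 1) • g (descentCount l),
    sum_permLists_headI_add_one_smul]

end Weighted

/-- For `n ≥ 3`, `∑_{w ∈ S_{n-1}} w(1) t^{des(w)+1} = ∑_{w ∈ S_{n-1}} (des(w)+1) t^{des(w)+1}`;
equivalently, for each `d`, `∑_{w : des(w) = d} w(1) = (d+1)·A_{d+1,n-1}`. -/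
theorem first_value_descent_identity (n : ℕ) (hn : 3 ≤ n) :
    (∑ w : Equiv.Perm (Fin (n - 1)),
        (C (((w ⟨0, by omega⟩ : Fin (n - 1)) : ℕ) + 1) * X ^ (numDescents w + 1) :
          Polynomial ℕ) =
      ∑ w : Equiv.Perm (Fin (n - 1)),
        (C (numDescents w + 1) * X ^ (numDescents w + 1) : Polynomial ℕ)) ∧
    (∀ d : ℕ,
      ∑ w ∈ Finset.univ.filter
          (fun w : Equiv.Perm (Fin (n - 1)) => numDescents w = d),
          (((w ⟨0, by omega⟩ : Fin (n - 1)) : ℕ) + 1) =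
        (d + 1) *
          (Finset.univ.filter
            (fun w : Equiv.Perm (Fin (n - 1)) => numDescents w = d)).card) := by
  have hm : 0 < n - 1 := by omega
  refine ⟨?_, fun d => ?_⟩
  · simpa only [Polynomial.C_mul'] using
      sum_perm_first_add_one_smul hm fun d => (X ^ (d + 1) : ℕ[X])
  · have H := sum_perm_first_add_one_smul hm fun e => if e = d then 1 else 0
    simp only [smul_eq_mul, mul_ite, mul_one, mul_zero] at H
    rw [Finset.sum_filter, H, Finset.card_filter, Finset.mul_sum]
    refine Finset.sum_congr rfl fun w _ => ?_
    split_ifs with h <;> simp [h]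
end
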